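/- arXiv:2303.12905 — 7 statements merged into one kernel-verified Lean document; each statement's English description precedes it below -/
import Mathlib

section
/- Let L be a Lie algebra over a field F of characteristic zero and let τ : L → F be a linear form vanishing on brackets (a trace, i.e. τ([x,y]) = 0 for all x,y). Define the ternary bracket [x₁,x₂,x₃]_τ = τ(x₁)[x₂,x₃] − τ(x₂)[x₁,x₃] + τ(x₃)[x₁,x₂]. Then (L, [·,·,·]_τ) is a 3-Lie algebra, i.e. the bracket is trilinear, skew-symmetric in all arguments, and satisfies the fundamental identity [[x₁,x₂,x₃],y₁,y₂] = [[x₁,y₁,y₂],x₂,x₃] + [[x₂,y₁,y₂],x₃,x₁] + [[x₃,y₁,y₂],x₁,x₂]. -/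
private lemma swap_lie_aux {L : Type*} [LieRing L]
    (a b : L) : ⁅a, b⁆ = -⁅b, a⁆ := by rw [← lie_skew]

private lemma jacobi3_aux {L : Type*} [LieRing L]
    (a b c : L) : ⁅c, ⁅a, b⁆⁆ = ⁅b, ⁅a, c⁆⁆ - ⁅a, ⁅b, c⁆⁆ := by
  rw [swap_lie_aux c ⁅a, b⁆, lie_lie]; abel

/-- The ternary bracket `[x₁,x₂,x₃]_τ = τ(x₁)[x₂,x₃] − τ(x₂)[x₁,x₃] + τ(x₃)[x₁,x₂]`
induced by a trace `τ` on a Lie algebra. -/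
def tauBracket {F : Type*} [Field F] {L : Type*} [LieRing L] [LieAlgebra F L]
    (τ : L →ₗ[F] F) (x y z : L) : L :=
  τ x • ⁅y, z⁆ - τ y • ⁅x, z⁆ + τ z • ⁅x, y⁆

/-- If `τ` is a trace on a Lie algebra `L` over a field of characteristic zero,
then `(L, [·,·,·]_τ)` is a `3`-Lie algebra: the bracket is trilinear,
skew-symmetric and satisfies the fundamental identity. -/
theorem tauBracket_threeLie {F : Type*} [Field F] [CharZero F]
    {L : Type*} [LieRing L] [LieAlgebra F L]
    (τ : L →ₗ[F] F) (hτ : ∀ x y : L, τ ⁅x, y⁆ = 0) :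
    (∀ x x' y z : L, tauBracket τ (x + x') y z =
      tauBracket τ x y z + tauBracket τ x' y z) ∧
    (∀ (c : F) (x y z : L), tauBracket τ (c • x) y z = c • tauBracket τ x y z) ∧
    (∀ x y y' z : L, tauBracket τ x (y + y') z =
      tauBracket τ x y z + tauBracket τ x y' z) ∧
    (∀ (c : F) (x y z : L), tauBracket τ x (c • y) z = c • tauBracket τ x y z) ∧
    (∀ x y z z' : L, tauBracket τ x y (z + z') =
      tauBracket τ x y z + tauBracket τ x y z') ∧
    (∀ (c : F) (x y z : L), tauBracket τ x y (c • z) = c • tauBracket τ x y z) ∧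
    (∀ x y z : L, tauBracket τ x y z = - tauBracket τ y x z) ∧
    (∀ x y z : L, tauBracket τ x y z = - tauBracket τ x z y) ∧
    (∀ x₁ x₂ x₃ y₁ y₂ : L,
      tauBracket τ (tauBracket τ x₁ x₂ x₃) y₁ y₂ =
        tauBracket τ (tauBracket τ x₁ y₁ y₂) x₂ x₃ +
        tauBracket τ (tauBracket τ x₂ y₁ y₂) x₃ x₁ +
        tauBracket τ (tauBracket τ x₃ y₁ y₂) x₁ x₂) := by
  refine ⟨?_, ?_, ?_, ?_, ?_, ?_, ?_, ?_, ?_⟩ <;>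
    intros <;>
    simp only [tauBracket, map_add, map_smul, map_sub, hτ, smul_eq_mul,
      add_lie, lie_add, smul_lie, lie_smul, smul_add, smul_sub, smul_smul,
      add_smul, sub_smul, zero_smul, smul_zero, mul_zero, zero_mul,
      sub_lie, lie_sub, zero_sub, sub_zero, zero_add, add_zero, neg_smul,
      lie_neg, neg_lie] <;>
    try module
  case refine_7 x y z =>
    rw [swap_lie_aux y x]
    simp only [lie_neg, neg_lie, smul_neg]
    module
  case refine_8 x y z =>
    rw [swap_lie_aux z y]
    simp only [lie_neg, neg_lie, smul_neg]
    module
  case refine_9 x₁ x₂ x₃ y₁ y₂ =>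
    simp only [lie_lie]
    simp only [swap_lie_aux y₁ x₁, swap_lie_aux y₁ x₂, swap_lie_aux y₁ x₃,
      swap_lie_aux y₂ x₁, swap_lie_aux y₂ x₂, swap_lie_aux y₂ x₃,
      swap_lie_aux y₂ y₁, swap_lie_aux x₂ x₁, swap_lie_aux x₃ x₁, swap_lie_aux x₃ x₂]
    simp only [lie_neg, neg_lie, smul_neg, neg_neg, sub_neg_eq_add, neg_sub]
    simp only [jacobi3_aux x₁ x₂ y₁, jacobi3_aux x₁ x₃ y₁, jacobi3_aux x₂ x₃ y₁,
      jacobi3_aux x₁ x₂ y₂, jacobi3_aux x₁ x₃ y₂, jacobi3_aux x₂ x₃ y₂,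
      jacobi3_aux x₁ y₂ y₁, jacobi3_aux x₂ y₂ y₁, jacobi3_aux x₃ y₂ y₁]
    simp only [swap_lie_aux y₂ y₁, lie_neg, neg_lie, smul_neg, neg_neg]
    module
end

section
/- Let G be an abelian group and let (L, A) be a G-graded 3-Lie-Rinehart algebra with supports Σ¹ = {g ∈ G \ {1} : L_g ≠ 0} and Λ¹ = {λ ∈ G \ {1} : A_λ ≠ 0}. The relation ∼ on Σ¹ defined by: g ∼ h iff there exists a family {g₁,...,g_{2n+1}} ⊆ Σ ∪ Λ ∪ {1} (where Σ = Σ¹ ∪ (Σ¹)^{-1}, Λ = Λ¹ ∪ (Λ¹)^{-1}) with g₁ = g, all partial products g₁g₂g₃, g₁g₂g₃g₄g₅, ..., g₁⋯g_{2n−1} lying in Σ, and g₁⋯g_{2n+1} ∈ {h, h^{-1}}, is an equivalence relation on Σ¹. -/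
/-- The `Σ¹`-connection relation between elements of a group, relative to
supports `Sig` (of `L`) and `Lam` (of `A`). -/
def SigmaConn {G : Type*} [CommGroup G] (Sig Lam : Set G) (g h : G) : Prop :=
  ∃ (n : ℕ) (f : ℕ → G),
    f 0 = g ∧
    (∀ i ≤ 2 * n, f i ∈ Sig ∪ Sig⁻¹ ∪ Lam ∪ Lam⁻¹ ∪ {1}) ∧
    (∀ m, 1 ≤ m → m < n → (∏ i ∈ Finset.range (2 * m + 1), f i) ∈ Sig ∪ Sig⁻¹) ∧
    ((∏ i ∈ Finset.range (2 * n + 1), f i) = h ∨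
      (∏ i ∈ Finset.range (2 * n + 1), f i) = h⁻¹)

/-- The `Λ¹`-connection relation. -/
def LambdaConn {G : Type*} [CommGroup G] (Sig Lam : Set G) (l m : G) : Prop :=
  ∃ (n : ℕ) (f : ℕ → G),
    1 ≤ n ∧ f 0 = l ∧
    (∀ i < n, f i ∈ Sig ∪ Sig⁻¹ ∪ Lam ∪ Lam⁻¹ ∪ {1}) ∧
    (∀ k, 2 ≤ k → k < n → (∏ i ∈ Finset.range k, f i) ∈ Lam ∪ Lam⁻¹) ∧
    ((∏ i ∈ Finset.range n, f i) = m ∨ (∏ i ∈ Finset.range n, f i) = m⁻¹)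

namespace SigmaConnProof

variable {G : Type*} [CommGroup G]

lemma inv_mem_U {Sig Lam : Set G} {x : G}
    (hx : x ∈ Sig ∪ Sig⁻¹ ∪ Lam ∪ Lam⁻¹ ∪ {1}) :
    x⁻¹ ∈ Sig ∪ Sig⁻¹ ∪ Lam ∪ Lam⁻¹ ∪ ({1} : Set G) := by
  simp only [Set.mem_union, Set.mem_inv, Set.mem_singleton_iff, inv_inv, inv_eq_one] at *
  tauto

lemma inv_mem_SS {Sig : Set G} {x : G} (hx : x ∈ Sig ∪ Sig⁻¹) :
    x⁻¹ ∈ Sig ∪ Sig⁻¹ := by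
  simp only [Set.mem_union, Set.mem_inv, inv_inv] at *
  tauto

lemma SS_mem_U {Sig Lam : Set G} {x : G} (hx : x ∈ Sig ∪ Sig⁻¹) :
    x ∈ Sig ∪ Sig⁻¹ ∪ Lam ∪ Lam⁻¹ ∪ ({1} : Set G) := by
  rcases hx with h | h
  · exact Or.inl (Or.inl (Or.inl (Or.inl h)))
  · exact Or.inl (Or.inl (Or.inl (Or.inr h)))

/-- An "exact" chain: like the chains of `SigmaConn` but with product exactly `h`. -/
def ExactChain (Sig Lam : Set G) (g h : G) : Prop :=
  ∃ (n : ℕ) (f : ℕ → G),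
    f 0 = g ∧
    (∀ i ≤ 2 * n, f i ∈ Sig ∪ Sig⁻¹ ∪ Lam ∪ Lam⁻¹ ∪ {1}) ∧
    (∀ m, 1 ≤ m → m < n → (∏ i ∈ Finset.range (2 * m + 1), f i) ∈ Sig ∪ Sig⁻¹) ∧
    (∏ i ∈ Finset.range (2 * n + 1), f i) = h

lemma sigmaConn_iff {Sig Lam : Set G} {g h : G} :
    SigmaConn Sig Lam g h ↔ ExactChain Sig Lam g h ∨ ExactChain Sig Lam g h⁻¹ := by
  constructor
  · rintro ⟨n, f, a, b, c, d | d⟩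
    · exact Or.inl ⟨n, f, a, b, c, d⟩
    · exact Or.inr ⟨n, f, a, b, c, d⟩
  · rintro (⟨n, f, a, b, c, d⟩ | ⟨n, f, a, b, c, d⟩)
    · exact ⟨n, f, a, b, c, Or.inl d⟩
    · exact ⟨n, f, a, b, c, Or.inr d⟩

lemma EC_refl {Sig Lam : Set G} {g : G} (hg : g ∈ Sig) : ExactChain Sig Lam g g := by
  refine ⟨0, fun _ => g, rfl, fun i _ => Or.inl (Or.inl (Or.inl (Or.inl hg))),
    fun m hm1 hm0 => absurd hm0 (by omega), ?_⟩
  norm_num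

lemma EC_inv {Sig Lam : Set G} {g h : G} (hc : ExactChain Sig Lam g h) :
    ExactChain Sig Lam g⁻¹ h⁻¹ := by
  obtain ⟨n, f, hf0, hU, hmid, hend⟩ := hc
  refine ⟨n, fun i => (f i)⁻¹, by beta_reduce; rw [hf0], fun i hi => inv_mem_U (hU i hi), ?_, ?_⟩
  · intro m hm1 hmn
    beta_reduce
    rw [Finset.prod_inv_distrib]
    exact inv_mem_SS (hmid m hm1 hmn)
  · beta_reduce
    rw [Finset.prod_inv_distrib, hend]

lemma prod_reflect_aux (f : ℕ → G) (a b : ℕ) :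
    (∏ i ∈ Finset.range (2*b), f (2*(a+b) - i))
      = (∏ i ∈ Finset.range (2*a+1), f i)⁻¹ * ∏ i ∈ Finset.range (2*(a+b)+1), f i := by
  rw [show 2*(a+b)+1 = (2*a+1) + 2*b by ring, Finset.prod_range_add f (2*a+1) (2*b),
    inv_mul_cancel_left]
  rw [← Finset.prod_range_reflect (fun i => f (2*a+1 + i)) (2*b)]
  apply Finset.prod_congr rfl
  intro i hi
  simp only [Finset.mem_range] at hi
  congr 1
  omega

lemma prodIf (f : ℕ → G) (h : G) (n m : ℕ) (hm : m ≤ n) :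
    (∏ i ∈ Finset.range (2*m+1), (if i = 0 then h else (f (2*n+1-i))⁻¹))
      = (∏ i ∈ Finset.range (2*n+1), f i)⁻¹
        * (∏ i ∈ Finset.range (2*(n-m)+1), f i) * h := by
  rw [Finset.prod_range_succ']
  have e : ∀ i ∈ Finset.range (2*m),
      (if i+1 = 0 then h else (f (2*n+1-(i+1)))⁻¹) = (f (2*n - i))⁻¹ := by
    intro i hi
    rw [if_neg (Nat.succ_ne_zero i)]
    congr 2
    omega
  rw [Finset.prod_congr rfl e, if_pos rfl, Finset.prod_inv_distrib]
  have key := prod_reflect_aux f (n - m) m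
  rw [show n - m + m = n from by omega] at key
  rw [key]
  group

lemma EC_symm {Sig Lam : Set G} {g h : G} (hh : h ∈ Sig ∪ Sig⁻¹)
    (hc : ExactChain Sig Lam g h) : ExactChain Sig Lam h g := by
  obtain ⟨n, f, hf0, hU, hmid, hend⟩ := hc
  refine ⟨n, fun i => if i = 0 then h else (f (2*n+1-i))⁻¹, if_pos rfl, ?_, ?_, ?_⟩
  · intro i hi
    beta_reduce
    by_cases h0 : i = 0
    · rw [h0, if_pos rfl]
      exact SS_mem_U hh
    · rw [if_neg h0]
      exact inv_mem_U (hU _ (by omega))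
  · intro m hm1 hmn
    beta_reduce
    rw [prodIf f h n m (le_of_lt hmn), hend, inv_mul_cancel_comm]
    exact hmid (n - m) (by omega) (by omega)
  · beta_reduce
    rw [prodIf f h n n le_rfl, hend, inv_mul_cancel_comm, Nat.sub_self]
    simpa using hf0

lemma EC_trans {Sig Lam : Set G} {g h k : G} (hh : h ∈ Sig ∪ Sig⁻¹)
    (h1 : ExactChain Sig Lam g h) (h2 : ExactChain Sig Lam h k) :
    ExactChain Sig Lam g k := by
  obtain ⟨n, f, hf0, hU1, hmid1, hend1⟩ := h1
  obtain ⟨n', f', hf0', hU2, hmid2, hend2⟩ := h2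
  set F : ℕ → G := fun i => if i < 2*n+1 then f i else f' (i - 2*n) with hF
  have key0 : ∀ m ≤ n, ∏ i ∈ Finset.range (2*m+1), F i = ∏ i ∈ Finset.range (2*m+1), f i := by
    intro m hm
    apply Finset.prod_congr rfl
    intro i hi
    simp only [Finset.mem_range] at hi
    simp only [hF]
    rw [if_pos (by omega)]
  have key : ∀ j, ∏ i ∈ Finset.range (2*(n+j)+1), F i = ∏ i ∈ Finset.range (2*j+1), f' i := by
    intro j
    rw [show 2*(n+j)+1 = (2*n+1) + 2*j by ring, Finset.prod_range_add]
    have e2 : ∀ i ∈ Finset.range (2*j), F (2*n+1+i) = f' (i+1) := by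
      intro i hi
      simp only [hF]
      rw [if_neg (by omega)]
      congr 1
      omega
    rw [show (∏ i ∈ Finset.range (2*n+1), F i) = ∏ i ∈ Finset.range (2*n+1), f i
          from key0 n le_rfl, hend1, Finset.prod_congr rfl e2,
        Finset.prod_range_succ' f' (2*j), hf0']
    exact mul_comm _ _
  refine ⟨n + n', F, ?_, ?_, ?_, ?_⟩
  · simp only [hF]
    rw [if_pos (by omega)]
    exact hf0
  · intro i hi
    simp only [hF]
    by_cases hc : i < 2*n+1
    · rw [if_pos hc]
      exact hU1 i (by omega)
    · rw [if_neg hc]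
      exact hU2 (i - 2*n) (by omega)
  · intro m hm1 hmn
    rcases lt_or_ge m n with hlt | hge
    · rw [key0 m (le_of_lt hlt)]
      exact hmid1 m hm1 hlt
    · rcases eq_or_lt_of_le hge with heq | hgt
      · rw [← heq, key0 n le_rfl, hend1]
        exact hh
      · have hj : m = n + (m - n) := by omega
        rw [hj, key]
        have : 1 ≤ m - n := by omega
        have : m - n < n' := by omega
        exact hmid2 (m - n) (by omega) (by omega)
  · rw [key n']
    exact hend2

lemma sigmaConn_symm {Sig Lam : Set G} {g h : G} (hh : h ∈ Sig)
    (hc : SigmaConn Sig Lam g h) : SigmaConn Sig Lam h g := by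
  rw [sigmaConn_iff] at hc ⊢
  rcases hc with hc | hc
  · exact Or.inl (EC_symm (Or.inl hh) hc)
  · have := EC_inv hc
    rw [inv_inv] at this
    exact Or.inr (EC_symm (Or.inl hh) this)

lemma sigmaConn_refl {Sig Lam : Set G} {g : G} (hg : g ∈ Sig) :
    SigmaConn Sig Lam g g := by
  rw [sigmaConn_iff]
  exact Or.inl (EC_refl hg)

lemma sigmaConn_trans {Sig Lam : Set G} {g h k : G} (hh : h ∈ Sig)
    (h1 : SigmaConn Sig Lam g h) (h2 : SigmaConn Sig Lam h k) :
    SigmaConn Sig Lam g k := by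
  have hhi : h⁻¹ ∈ Sig ∪ Sig⁻¹ := Or.inr (by simpa using hh)
  rw [sigmaConn_iff] at h1 h2 ⊢
  rcases h1 with h1 | h1 <;> rcases h2 with h2 | h2
  · exact Or.inl (EC_trans (Or.inl hh) h1 h2)
  · exact Or.inr (EC_trans (Or.inl hh) h1 h2)
  · exact Or.inr (EC_trans hhi h1 (EC_inv h2))
  · have := EC_inv h2
    rw [inv_inv] at this
    exact Or.inl (EC_trans hhi h1 this)

end SigmaConnProof

/-- A `G`-graded `3`-Lie–Rinehart algebra `(L, A)`. -/
structure GradedThreeLieRinehart (F : Type*) [Field F] (G : Type*) [CommGroup G]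
    [DecidableEq G] (A : Type*) [CommRing A] [Algebra F A]
    (L : Type*) [AddCommGroup L] [Module F L] [Module A L] [IsScalarTower F A L] where
  bracket : L →ₗ[F] L →ₗ[F] L →ₗ[F] L
  rho : L →ₗ[F] L →ₗ[F] Module.End F A
  skew₁ : ∀ x y z : L, bracket x y z = - bracket y x z
  skew₂ : ∀ x y z : L, bracket x y z = - bracket x z y
  fund : ∀ x₁ x₂ x₃ y₁ y₂ : L, bracket (bracket x₁ x₂ x₃) y₁ y₂ =
      bracket (bracket x₁ y₁ y₂) x₂ x₃ + bracket (bracket x₂ y₁ y₂) x₃ x₁ +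
      bracket (bracket x₃ y₁ y₂) x₁ x₂
  rep₁ : ∀ x₁ x₂ x₃ x₄ : L,
      rho x₁ x₂ * rho x₃ x₄ - rho x₃ x₄ * rho x₁ x₂ =
      rho (bracket x₁ x₂ x₃) x₄ - rho (bracket x₁ x₂ x₄) x₃
  rep₂ : ∀ x₁ x₂ x₃ x₄ : L,
      rho (bracket x₁ x₂ x₃) x₄ =
      rho x₁ x₂ * rho x₃ x₄ + rho x₂ x₃ * rho x₁ x₄ + rho x₃ x₁ * rho x₂ x₄
  rho_der : ∀ x y : L, ∀ a b : A, rho x y (a * b) = a * rho x y b + rho x y a * b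
  compat : ∀ x y z : L, ∀ a : A, bracket x y (a • z) = a • bracket x y z + rho x y a • z
  rho_smul_left : ∀ (a : A) (x y : L), rho (a • x) y = a • rho x y
  rho_smul_right : ∀ (a : A) (x y : L), rho x (a • y) = a • rho x y
  Lg : G → Submodule F L
  Ag : G → Submodule F A
  decompL : DirectSum.IsInternal Lg
  decompA : DirectSum.IsInternal Ag
  bracket_grade : ∀ g h k : G, ∀ x ∈ Lg g, ∀ y ∈ Lg h, ∀ z ∈ Lg k,
      bracket x y z ∈ Lg (g * h * k)
  mul_grade : ∀ g h : G, ∀ a ∈ Ag g, ∀ b ∈ Ag h, a * b ∈ Ag (g * h)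
  smul_grade : ∀ h g : G, ∀ a ∈ Ag h, ∀ x ∈ Lg g, a • x ∈ Lg (h * g)
  rho_grade : ∀ g g' h : G, ∀ x ∈ Lg g, ∀ y ∈ Lg g', ∀ a ∈ Ag h,
      rho x y a ∈ Ag (g * g' * h)

namespace GradedThreeLieRinehart

variable {F : Type*} [Field F] {G : Type*} [CommGroup G] [DecidableEq G]
  {A : Type*} [CommRing A] [Algebra F A]
  {L : Type*} [AddCommGroup L] [Module F L] [Module A L] [IsScalarTower F A L]
  (T : GradedThreeLieRinehart F G A L)

/-- The support `Σ¹` of the grading of `L`. -/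
def Sigma1 : Set G := {g | g ≠ 1 ∧ T.Lg g ≠ ⊥}

/-- The support `Λ¹` of the grading of `A`. -/
def Lambda1 : Set G := {g | g ≠ 1 ∧ T.Ag g ≠ ⊥}

/-- `g` is `Σ¹`-connected to `h`. -/
def conn (g h : G) : Prop := SigmaConn T.Sigma1 T.Lambda1 g h

/-- `l` is `Λ¹`-connected to `m`. -/
def connA (l m : G) : Prop := LambdaConn T.Sigma1 T.Lambda1 l m

/-- The `Σ¹`-connection class `[g]` of `g`. -/
def classOf (g : G) : Set G := {h | h ∈ T.Sigma1 ∧ T.conn g h}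

/-- The `Λ¹`-connection class `[λ]` of `l`. -/
def classOfA (l : G) : Set G := {m | m ∈ T.Lambda1 ∧ T.connA l m}

/-- `L_{1,[g]}` for a class `C = [g]`. -/
def L1span (C : Set G) : Submodule F L :=
  Submodule.span F
    ({x | ∃ h ∈ C ∩ T.Lambda1, ∃ a ∈ T.Ag h⁻¹, ∃ y ∈ T.Lg h, x = a • y} ∪
     {x | ∃ h ∈ C, ∃ k ∈ C, ∃ y ∈ T.Lg h, ∃ z ∈ T.Lg k, ∃ w ∈ T.Lg (h * k)⁻¹,
        x = T.bracket y z w})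

/-- `V_{[g]} = ⊕_{h ∈ [g]} L_h`. -/
def Vspan (C : Set G) : Submodule F L := ⨆ h ∈ C, T.Lg h

/-- The ideal `I_{[g]} = L_{1,[g]} ⊕ V_{[g]}`. -/
def Iclass (g : G) : Submodule F L :=
  T.L1span (T.classOf g) ⊔ T.Vspan (T.classOf g)

/-- `Σ_{g∈Σ¹∩Λ¹} A_{g⁻¹}L_g + Σ_{h,k∈Σ¹}[L_h, L_k, L_{(hk)⁻¹}]`. -/
def Lone : Submodule F L :=
  Submodule.span F
    ({x | ∃ g ∈ T.Sigma1 ∩ T.Lambda1, ∃ a ∈ T.Ag g⁻¹, ∃ y ∈ T.Lg g, x = a • y} ∪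
     {x | ∃ h ∈ T.Sigma1, ∃ k ∈ T.Sigma1, ∃ y ∈ T.Lg h, ∃ z ∈ T.Lg k,
        ∃ w ∈ T.Lg (h * k)⁻¹, x = T.bracket y z w})

/-- `A_{1,[λ]}` for a class `C = [λ]`. -/
def A1span (C : Set G) : Submodule F A :=
  Submodule.span F
    ({x | ∃ m ∈ C, ∃ a ∈ T.Ag m⁻¹, ∃ b ∈ T.Ag m, x = a * b} ∪
     {x | ∃ h ∈ C ∩ T.Sigma1, ∃ k ∈ C ∩ T.Sigma1, ∃ y ∈ T.Lg h, ∃ z ∈ T.Lg k,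
        ∃ a ∈ T.Ag (h * k)⁻¹, x = T.rho y z a})

/-- `A_{[λ]} = ⊕_{μ ∈ [λ]} A_μ`. -/
def AVspan (C : Set G) : Submodule F A := ⨆ m ∈ C, T.Ag m

/-- `𝒜_{[λ]} = A_{1,[λ]} ⊕ A_{[λ]}`. -/
def Aclass (l : G) : Submodule F A :=
  T.A1span (T.classOfA l) ⊔ T.AVspan (T.classOfA l)

/-- `Σ_{μ∈Λ¹} A_{μ⁻¹}A_μ + Σ_{h,k∈Λ¹∩Σ¹} ρ(L_h,L_k)(A_{(hk)⁻¹})`. -/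
def Aone : Submodule F A :=
  Submodule.span F
    ({x | ∃ m ∈ T.Lambda1, ∃ a ∈ T.Ag m⁻¹, ∃ b ∈ T.Ag m, x = a * b} ∪
     {x | ∃ h ∈ T.Lambda1 ∩ T.Sigma1, ∃ k ∈ T.Lambda1 ∩ T.Sigma1, ∃ y ∈ T.Lg h,
        ∃ z ∈ T.Lg k, ∃ a ∈ T.Ag (h * k)⁻¹, x = T.rho y z a})

/-- A graded ideal of the graded `3`-Lie–Rinehart algebra `(L, A)`. -/
def IsGradedIdeal (I : Submodule F L) : Prop :=
  (I = ⨆ g : G, I ⊓ T.Lg g) ∧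
  (∀ x ∈ I, ∀ y z : L, T.bracket x y z ∈ I) ∧
  (∀ (a : A), ∀ x ∈ I, a • x ∈ I) ∧
  (∀ x ∈ I, ∀ y ∈ I, ∀ (a : A) (l : L), T.rho x y a • l ∈ I)

/-- The kernel of the representation `ρ`, as a set. -/
def kerRhoSet : Set L := {x | ∀ y : L, T.rho x y = 0}

/-- Graded simplicity of `(L, A)`. -/
def IsGrSimple : Prop :=
  (∃ x y z : L, T.bracket x y z ≠ 0) ∧
  ∀ I : Submodule F L, T.IsGradedIdeal I →
    I = ⊥ ∨ I = ⊤ ∨ (I : Set L) = T.kerRhoSet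

/-- Tightness of a graded `3`-Lie–Rinehart algebra. -/
def Tight : Prop :=
  (∀ x : L, (∀ y z : L, T.bracket x y z = 0) → (∀ y : L, T.rho x y = 0) → x = 0) ∧
  (∀ a : A, (∀ b : A, a * b = 0) → a = 0) ∧
  (∀ x : L, (∀ a : A, a • x = 0) → x = 0) ∧
  (∀ a : A, a ∈ Submodule.span F {x : A | ∃ b c : A, x = b * c}) ∧
  (∀ x : L, x ∈ Submodule.span F {y : L | ∃ (a : A) (z : L), y = a • z}) ∧
  T.Lg 1 = T.Lone ∧
  T.Ag 1 = T.Aone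

/-- Maximal length: every nonzero homogeneous component has dimension one. -/
def MaximalLength : Prop :=
  (∀ g ∈ T.Sigma1, Module.finrank F (T.Lg g) = 1) ∧
  (∀ l ∈ T.Lambda1, Module.finrank F (T.Ag l) = 1)

/-- `G`-multiplicativity. -/
def GMult : Prop :=
  (∀ g ∈ T.Sigma1, ∀ h ∈ T.Sigma1, ∀ k ∈ T.Sigma1, g * h * k ∈ T.Sigma1 →
    ∃ x ∈ T.Lg g, ∃ y ∈ T.Lg h, ∃ z ∈ T.Lg k, T.bracket x y z ≠ 0) ∧
  (∀ l ∈ T.Lambda1, ∀ g ∈ T.Sigma1, l * g ∈ T.Sigma1 →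
    ∃ a ∈ T.Ag l, ∃ x ∈ T.Lg g, a • x ≠ (0 : L)) ∧
  (∀ l ∈ T.Lambda1, ∀ m ∈ T.Lambda1, l * m ∈ T.Lambda1 →
    ∃ a ∈ T.Ag l, ∃ b ∈ T.Ag m, a * b ≠ 0)

/-- A graded simple ideal. -/
def IsGradedSimpleIdeal (I : Submodule F L) : Prop :=
  T.IsGradedIdeal I ∧ I ≠ ⊥ ∧
  ∀ J : Submodule F L, T.IsGradedIdeal J → J ≤ I → J = ⊥ ∨ J = I

end GradedThreeLieRinehart

open GradedThreeLieRinehart in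
/-- The `Σ¹`-connection relation is an equivalence relation on `Σ¹`. -/
theorem sigmaConn_is_equivalence {F : Type*} [Field F] {G : Type*} [CommGroup G]
    [DecidableEq G] {A : Type*} [CommRing A] [Algebra F A]
    {L : Type*} [AddCommGroup L] [Module F L] [Module A L] [IsScalarTower F A L]
    (T : GradedThreeLieRinehart F G A L) :
    (∀ g ∈ T.Sigma1, T.conn g g) ∧
    (∀ g ∈ T.Sigma1, ∀ h ∈ T.Sigma1, T.conn g h → T.conn h g) ∧
    (∀ g ∈ T.Sigma1, ∀ h ∈ T.Sigma1, ∀ k ∈ T.Sigma1,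
      T.conn g h → T.conn h k → T.conn g k) := by
  exact ⟨fun g hg => SigmaConnProof.sigmaConn_refl hg,
    fun g hg h hh hc => SigmaConnProof.sigmaConn_symm hh hc,
    fun g hg h hh k hk h1 h2 => SigmaConnProof.sigmaConn_trans hh h1 h2⟩
end

section
/- Let G be an abelian group and Σ¹, Λ¹ ⊆ G \ {1} with Σ = Σ¹ ∪ (Σ¹)^{-1}, Λ = Λ¹ ∪ (Λ¹)^{-1}. Suppose g, h ∈ Σ¹ are Σ¹-connected (there exists a connection from g to h). If g', g'' ∈ Σ ∪ Λ ∪ {1} and gg'g'' ∈ Σ¹, then h is Σ¹-connected to gg'g''. -/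
private lemma inv_mem_S {G : Type*} [CommGroup G] {Sig Lam : Set G} {x : G}
    (hx : x ∈ Sig ∪ Sig⁻¹ ∪ Lam ∪ Lam⁻¹ ∪ {1}) :
    x⁻¹ ∈ Sig ∪ Sig⁻¹ ∪ Lam ∪ Lam⁻¹ ∪ {1} := by
  rcases hx with (((h | h) | h) | h) | h
  · exact Or.inl (Or.inl (Or.inl (Or.inr (by simpa using h))))
  · exact Or.inl (Or.inl (Or.inl (Or.inl (by simpa using h))))
  · exact Or.inl (Or.inr (by simpa using h))
  · exact Or.inl (Or.inl (Or.inr (by simpa using h)))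
  · right; simp_all

private lemma cancel_ac {G : Type*} [CommGroup G] (x y q r : G) :
    x * (y * (q * (x⁻¹ * (y⁻¹ * r)))) = q * r := by
  rw [mul_left_comm q x⁻¹, mul_left_comm y x⁻¹, mul_inv_cancel_left,
    mul_left_comm q y⁻¹, mul_inv_cancel_left]

private lemma aux_prod {G : Type*} [CommGroup G] (f F : ℕ → G) (n : ℕ)
    (hF : ∀ i, 1 ≤ i → i ≤ 2 * n → F i = (f (2 * n + 1 - i))⁻¹) :
    ∀ m, m ≤ n → (∏ i ∈ Finset.range (2 * m + 1), F i) =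
      F 0 * (∏ i ∈ Finset.range (2 * (n - m) + 1), f i) *
        (∏ i ∈ Finset.range (2 * n + 1), f i)⁻¹ := by
  intro m
  induction m with
  | zero => intro _; simp
  | succ m ih =>
    intro hm
    have h1 : 2 * (m + 1) + 1 = (2 * m + 1) + 1 + 1 := by ring
    rw [h1, Finset.prod_range_succ, Finset.prod_range_succ, ih (by omega)]
    have h2 : 2 * (n - m) + 1 = (2 * (n - (m + 1)) + 1) + 1 + 1 := by omega
    rw [h2, Finset.prod_range_succ, Finset.prod_range_succ,
      hF (2 * m + 1) (by omega) (by omega), hF (2 * m + 1 + 1) (by omega) (by omega)]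
    have e1 : 2 * n + 1 - (2 * m + 1) = 2 * (n - (m + 1)) + 1 + 1 := by omega
    have e2 : 2 * n + 1 - (2 * m + 1 + 1) = 2 * (n - (m + 1)) + 1 := by omega
    rw [e1, e2]
    generalize f (2 * (n - (m + 1)) + 1) = a
    generalize f (2 * (n - (m + 1)) + 1 + 1) = b
    generalize (∏ i ∈ Finset.range (2 * (n - (m + 1)) + 1), f i) = Q
    generalize (∏ i ∈ Finset.range (2 * n + 1), f i) = P
    simp only [mul_assoc, mul_comm, mul_left_comm]
    exact cancel_ac _ _ _ _

/-- If `g` is `Σ¹`-connected to `h`, `g', g'' ∈ Σ ∪ Λ ∪ {1}` and `gg'g'' ∈ Σ¹`,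
then `h` is `Σ¹`-connected to `gg'g''`. -/
theorem conn_to_product {G : Type*} [CommGroup G] (Sig Lam : Set G)
    (hS : ∀ g ∈ Sig, g ≠ (1 : G)) (hL : ∀ l ∈ Lam, l ≠ (1 : G))
    (g h : G) (hg : g ∈ Sig) (hh : h ∈ Sig)
    (hconn : SigmaConn Sig Lam g h)
    (g' g'' : G)
    (hg' : g' ∈ Sig ∪ Sig⁻¹ ∪ Lam ∪ Lam⁻¹ ∪ {1})
    (hg'' : g'' ∈ Sig ∪ Sig⁻¹ ∪ Lam ∪ Lam⁻¹ ∪ {1})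
    (hmem : g * g' * g'' ∈ Sig) :
    SigmaConn Sig Lam h (g * g' * g'') := by
  obtain ⟨n, f, hf0, hmemf, hpart, hfinal⟩ := hconn
  have hg0 : (∏ i ∈ Finset.range (2 * 0 + 1), f i) = g := by simp [hf0]
  rcases hfinal with hfin | hfin
  · -- case ∏ f = h
    set F : ℕ → G := fun i => if i = 0 then h else if i ≤ 2 * n then
      (f (2 * n + 1 - i))⁻¹ else if i = 2 * n + 1 then g' else g'' with hFdef
    have hF0 : F 0 = h := by simp [hFdef]
    have hFmid : ∀ i, 1 ≤ i → i ≤ 2 * n → F i = (f (2 * n + 1 - i))⁻¹ := by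
      intro i hi1 hi2
      simp only [hFdef, if_neg (by omega : ¬ i = 0), if_pos hi2]
    have key := aux_prod f F n hFmid
    have key2 : ∀ m, m ≤ n → (∏ i ∈ Finset.range (2 * m + 1), F i) =
        h * (∏ i ∈ Finset.range (2 * (n - m) + 1), f i) * h⁻¹ := by
      intro m hm; rw [key m hm, hF0, hfin]
    refine ⟨n + 1, F, hF0, ?_, ?_, ?_⟩
    · intro i hi
      by_cases h0 : i = 0
      · rw [hFdef]; simp only [if_pos h0]
        exact Or.inl (Or.inl (Or.inl (Or.inl hh)))
      by_cases h1 : i ≤ 2 * n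
      · rw [hFmid i (by omega) h1]
        exact inv_mem_S (hmemf _ (by omega))
      by_cases h2 : i = 2 * n + 1
      · rw [hFdef]; simp only [if_neg h0, if_neg h1, if_pos h2]; exact hg'
      · rw [hFdef]; simp only [if_neg h0, if_neg h1, if_neg h2]; exact hg''
    · intro m hm1 hm2
      rw [key2 m (by omega)]
      by_cases hmn : m = n
      · subst hmn
        rw [Nat.sub_self, hg0, mul_comm h g, mul_inv_cancel_right]
        exact Or.inl hg
      · rw [mul_comm h, mul_inv_cancel_right]
        exact hpart (n - m) (by omega) (by omega)
    · left
      have h3 : 2 * (n + 1) + 1 = (2 * n + 1) + 1 + 1 := by ring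
      rw [h3, Finset.prod_range_succ, Finset.prod_range_succ, key2 n le_rfl,
        Nat.sub_self, hg0, mul_comm h g, mul_inv_cancel_right]
      have e1 : F (2 * n + 1) = g' := by
        rw [hFdef]; simp only [if_neg (by omega : ¬ 2 * n + 1 = 0),
          if_neg (by omega : ¬ 2 * n + 1 ≤ 2 * n), eq_self_iff_true, if_true]
      have e2 : F (2 * n + 1 + 1) = g'' := by
        rw [hFdef]; simp only [if_neg (by omega : ¬ 2 * n + 1 + 1 = 0),
          if_neg (by omega : ¬ 2 * n + 1 + 1 ≤ 2 * n),
          if_neg (by omega : ¬ 2 * n + 1 + 1 = 2 * n + 1)]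
      rw [e1, e2]
  · -- case ∏ f = h⁻¹
    set F : ℕ → G := fun i => if i = 0 then h else if i ≤ 2 * n then
      f (2 * n + 1 - i) else if i = 2 * n + 1 then g'⁻¹ else g''⁻¹ with hFdef
    have hF0 : F 0 = h := by simp [hFdef]
    have hFmid : ∀ i, 1 ≤ i → i ≤ 2 * n → F i = ((fun j => (f j)⁻¹) (2 * n + 1 - i))⁻¹ := by
      intro i hi1 hi2
      simp only [hFdef, if_neg (by omega : ¬ i = 0), if_pos hi2, inv_inv]
    have key := aux_prod (fun j => (f j)⁻¹) F n hFmid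
    have key3 : ∀ m, m ≤ n → (∏ i ∈ Finset.range (2 * m + 1), F i) =
        (∏ i ∈ Finset.range (2 * (n - m) + 1), f i)⁻¹ := by
      intro m hm
      rw [key m hm, hF0]
      simp only [Finset.prod_inv_distrib, inv_inv]
      rw [hfin, mul_comm h, mul_assoc, mul_inv_cancel, mul_one]
    refine ⟨n + 1, F, hF0, ?_, ?_, ?_⟩
    · intro i hi
      by_cases h0 : i = 0
      · rw [hFdef]; simp only [if_pos h0]
        exact Or.inl (Or.inl (Or.inl (Or.inl hh)))
      by_cases h1 : i ≤ 2 * n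
      · rw [hFdef]; simp only [if_neg h0, if_pos h1]
        exact hmemf _ (by omega)
      by_cases h2 : i = 2 * n + 1
      · rw [hFdef]; simp only [if_neg h0, if_neg h1, if_pos h2]
        exact inv_mem_S hg'
      · rw [hFdef]; simp only [if_neg h0, if_neg h1, if_neg h2]
        exact inv_mem_S hg''
    · intro m hm1 hm2
      rw [key3 m (by omega)]
      by_cases hmn : m = n
      · subst hmn
        rw [Nat.sub_self, hg0]
        exact Or.inr (by simpa using hg)
      · rcases hpart (n - m) (by omega) (by omega) with hp | hp
        · exact Or.inr (by simpa using hp)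
        · exact Or.inl (by simpa using hp)
    · right
      have h3 : 2 * (n + 1) + 1 = (2 * n + 1) + 1 + 1 := by ring
      rw [h3, Finset.prod_range_succ, Finset.prod_range_succ, key3 n le_rfl,
        Nat.sub_self, hg0]
      have e1 : F (2 * n + 1) = g'⁻¹ := by
        rw [hFdef]; simp only [if_neg (by omega : ¬ 2 * n + 1 = 0),
          if_neg (by omega : ¬ 2 * n + 1 ≤ 2 * n), eq_self_iff_true, if_true]
      have e2 : F (2 * n + 1 + 1) = g''⁻¹ := by
        rw [hFdef]; simp only [if_neg (by omega : ¬ 2 * n + 1 + 1 = 0),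
          if_neg (by omega : ¬ 2 * n + 1 + 1 ≤ 2 * n),
          if_neg (by omega : ¬ 2 * n + 1 + 1 = 2 * n + 1)]
      rw [e1, e2]
      simp [mul_inv_rev, mul_comm, mul_left_comm, mul_assoc]
end

section
/- Let (L, A) be a G-graded 3-Lie-Rinehart algebra with support Σ¹ of L. For g ∈ Σ¹ let [g] denote its Σ¹-connection equivalence class, and define L_{1,[g]} = Σ_{h∈[g]∩Λ¹} A_{h^{-1}} L_h + Σ_{h,k∈[g]} [L_h, L_k, L_{(hk)^{-1}}] ⊆ L_1 and V_{[g]} = ⊕_{h∈[g]} L_h, and set I_{[g]} = L_{1,[g]} ⊕ V_{[g]}. Then [I_{[g]}, I_{[g]}, I_{[g]}] ⊆ I_{[g]}, i.e. I_{[g]} is a 3-Lie subalgebra of L. -/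
section SigmaConnAux

variable {G : Type*} [CommGroup G] {Sig Lam : Set G}

private lemma aux_mem_U_inv {x : G}
    (hx : x ∈ Sig ∪ Sig⁻¹ ∪ Lam ∪ Lam⁻¹ ∪ {1}) :
    x⁻¹ ∈ Sig ∪ Sig⁻¹ ∪ Lam ∪ Lam⁻¹ ∪ {1} := by
  simp only [Set.mem_union, Set.mem_inv, Set.mem_singleton_iff, inv_inv] at hx ⊢
  rcases hx with ((((h | h) | h) | h) | rfl)
  · tauto
  · tauto
  · tauto
  · tauto
  · simp

private lemma aux_mem_SS_inv {x : G} (hx : x ∈ Sig ∪ Sig⁻¹) :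
    x⁻¹ ∈ Sig ∪ Sig⁻¹ := by
  simp only [Set.mem_union, Set.mem_inv, inv_inv] at hx ⊢
  tauto

private lemma aux_sigmaConn_trans_gen {g h t : G} (hhS : h ∈ Sig)
    (e : G →* G)
    (heU : ∀ x, x ∈ Sig ∪ Sig⁻¹ ∪ Lam ∪ Lam⁻¹ ∪ {1} →
      e x ∈ Sig ∪ Sig⁻¹ ∪ Lam ∪ Lam⁻¹ ∪ {1})
    (heS : ∀ x, x ∈ Sig ∪ Sig⁻¹ → e x ∈ Sig ∪ Sig⁻¹)
    (het : ∀ x, (x = t ∨ x = t⁻¹) → (e x = t ∨ e x = t⁻¹))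
    (n₁ : ℕ) (f : ℕ → G) (hf0 : f 0 = g)
    (hfU : ∀ i ≤ 2 * n₁, f i ∈ Sig ∪ Sig⁻¹ ∪ Lam ∪ Lam⁻¹ ∪ {1})
    (hfP : ∀ m, 1 ≤ m → m < n₁ → (∏ i ∈ Finset.range (2 * m + 1), f i) ∈ Sig ∪ Sig⁻¹)
    (hfE : (∏ i ∈ Finset.range (2 * n₁ + 1), f i) = e h)
    (n₂ : ℕ) (f' : ℕ → G) (hf'0 : f' 0 = h)
    (hf'U : ∀ i ≤ 2 * n₂, f' i ∈ Sig ∪ Sig⁻¹ ∪ Lam ∪ Lam⁻¹ ∪ {1})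
    (hf'P : ∀ m, 1 ≤ m → m < n₂ → (∏ i ∈ Finset.range (2 * m + 1), f' i) ∈ Sig ∪ Sig⁻¹)
    (hf'E : (∏ i ∈ Finset.range (2 * n₂ + 1), f' i) = t ∨
      (∏ i ∈ Finset.range (2 * n₂ + 1), f' i) = t⁻¹) :
    SigmaConn Sig Lam g t := by
  classical
  set F : ℕ → G := fun i => if i ≤ 2 * n₁ then f i else e (f' (i - 2 * n₁)) with hF
  have hprod : ∀ m', (∏ i ∈ Finset.range (2 * (n₁ + m') + 1), F i)
      = e (∏ i ∈ Finset.range (2 * m' + 1), f' i) := by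
    intro m'
    have h1 : 2 * (n₁ + m') + 1 = (2 * n₁ + 1) + 2 * m' := by ring
    rw [h1, Finset.prod_range_add]
    have h2 : (∏ i ∈ Finset.range (2 * n₁ + 1), F i) = e h := by
      rw [← hfE]
      refine Finset.prod_congr rfl fun i hi => ?_
      simp only [Finset.mem_range] at hi
      simp [hF, Nat.lt_succ_iff.mp hi]
    have h3 : (∏ j ∈ Finset.range (2 * m'), F (2 * n₁ + 1 + j))
        = ∏ j ∈ Finset.range (2 * m'), e (f' (j + 1)) := by
      refine Finset.prod_congr rfl fun j _ => ?_
      have hc : ¬ (2 * n₁ + 1 + j ≤ 2 * n₁) := by omega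
      have h4 : 2 * n₁ + 1 + j - 2 * n₁ = j + 1 := by omega
      simp [hF, hc, h4]
    rw [h2, h3, ← map_prod]
    have h5 : (∏ i ∈ Finset.range (2 * m' + 1), f' i)
        = (∏ j ∈ Finset.range (2 * m'), f' (j + 1)) * h := by
      rw [Finset.prod_range_succ' f' (2 * m'), hf'0]
    rw [h5, map_mul, mul_comm]
  refine ⟨n₁ + n₂, F, ?_, ?_, ?_, ?_⟩
  · simp [hF, hf0]
  · intro i hi
    by_cases hc : i ≤ 2 * n₁
    · simpa [hF, hc] using hfU i hc
    · have hle : i - 2 * n₁ ≤ 2 * n₂ := by omega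
      simpa [hF, hc] using heU _ (hf'U _ hle)
  · intro m hm1 hmn
    by_cases hc : m < n₁
    · have heq : (∏ i ∈ Finset.range (2 * m + 1), F i)
          = ∏ i ∈ Finset.range (2 * m + 1), f i := by
        refine Finset.prod_congr rfl fun i hi => ?_
        simp only [Finset.mem_range] at hi
        have : i ≤ 2 * n₁ := by omega
        simp [hF, this]
      rw [heq]; exact hfP m hm1 hc
    · have hm' : m = n₁ + (m - n₁) := by omega
      rw [hm', hprod]
      rcases Nat.eq_zero_or_pos (m - n₁) with h0 | h0
      · rw [h0]
        simpa [hf'0] using heS h (Or.inl hhS)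
      · exact heS _ (hf'P _ h0 (by omega))
  · have hp := hprod n₂
    rw [hp]
    exact het _ hf'E

private lemma aux_sigmaConn_trans {g h t : G} (hhS : h ∈ Sig)
    (h1 : SigmaConn Sig Lam g h) (h2 : SigmaConn Sig Lam h t) :
    SigmaConn Sig Lam g t := by
  obtain ⟨n₁, f, hf0, hfU, hfP, hfE⟩ := h1
  obtain ⟨n₂, f', hf'0, hf'U, hf'P, hf'E⟩ := h2
  rcases hfE with hE | hE
  · exact aux_sigmaConn_trans_gen hhS (MonoidHom.id G) (fun x hx => hx) (fun x hx => hx)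
      (fun x hx => hx) n₁ f hf0 hfU hfP hE n₂ f' hf'0 hf'U hf'P hf'E
  · refine aux_sigmaConn_trans_gen hhS invMonoidHom (fun x hx => aux_mem_U_inv hx)
      (fun x hx => aux_mem_SS_inv hx) ?_ n₁ f hf0 hfU hfP (by simpa using hE)
      n₂ f' hf'0 hf'U hf'P hf'E
    rintro x (rfl | rfl)
    · exact Or.inr (by simp [invMonoidHom])
    · exact Or.inl (by simp [invMonoidHom])

private lemma aux_sigmaConn_step {h a b : G} (hh : h ∈ Sig)
    (ha : a ∈ Sig ∪ Sig⁻¹ ∪ Lam ∪ Lam⁻¹ ∪ {1})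
    (hb : b ∈ Sig ∪ Sig⁻¹ ∪ Lam ∪ Lam⁻¹ ∪ {1}) :
    SigmaConn Sig Lam h (h * a * b) := by
  classical
  have hhU : h ∈ Sig ∪ Sig⁻¹ ∪ Lam ∪ Lam⁻¹ ∪ {1} :=
    Or.inl (Or.inl (Or.inl (Or.inl hh)))
  refine ⟨1, fun i => if i = 0 then h else if i = 1 then a else b, by simp, ?_, ?_, ?_⟩
  · intro i hi
    match i with
    | 0 => simpa using hhU
    | 1 => simpa using ha
    | 2 => simpa using hb
  · intro m hm1 hm; omega
  · left
    rw [show 2 * 1 + 1 = 3 from rfl, Finset.prod_range_succ, Finset.prod_range_succ,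
      Finset.prod_range_one]
    simp

end SigmaConnAux

namespace GradedThreeLieRinehart

variable {F : Type*} [Field F] {G : Type*} [CommGroup G] [DecidableEq G]
  {A : Type*} [CommRing A] [Algebra F A]
  {L : Type*} [AddCommGroup L] [Module F L] [Module A L] [IsScalarTower F A L]
  (T : GradedThreeLieRinehart F G A L)

private lemma aux_cyc (a b c : L) : T.bracket a b c = T.bracket b c a := by
  rw [T.skew₁ a b c, T.skew₂ b a c, neg_neg]

private lemma aux_L1span_le_one (C : Set G) : T.L1span C ≤ T.Lg 1 := by
  refine Submodule.span_le.2 ?_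
  rintro x (⟨m, hm, a, ha, y, hy, rfl⟩ | ⟨p, hp, q, hq, u, hu, v, hv, w, hw, rfl⟩)
  · simpa using T.smul_grade m⁻¹ m a ha y hy
  · have := T.bracket_grade p q (p * q)⁻¹ u hu v hv w hw
    rwa [mul_inv_cancel] at this

private lemma aux_bracket_L1span (C : Set G) {h k : G} (hhk : h * k = 1) {x y : L}
    (hx : x ∈ T.Lg h) (hy : y ∈ T.Lg k) :
    ∀ z ∈ T.L1span C, T.bracket x y z ∈ T.L1span C := by
  intro z hz
  induction hz using Submodule.span_induction with
  | mem w hw =>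
    rcases hw with ⟨m, hm, a, ha, u, hu, rfl⟩ | ⟨p, hp, q, hq, u, hu, v, hv, w, hw, rfl⟩
    · rw [T.compat]
      refine add_mem ?_ ?_
      · refine Submodule.subset_span (Or.inl ⟨m, hm, a, ha, T.bracket x y u, ?_, rfl⟩)
        have := T.bracket_grade h k m x hx y hy u hu
        rwa [hhk, one_mul] at this
      · refine Submodule.subset_span (Or.inl ⟨m, hm, T.rho x y a, ?_, u, hu, rfl⟩)
        have := T.rho_grade h k m⁻¹ x hx y hy a ha
        rwa [hhk, one_mul] at this
    · have key : T.bracket x y (T.bracket u v w)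
          = T.bracket (T.bracket u x y) v w + T.bracket u (T.bracket v x y) w
            + T.bracket u v (T.bracket w x y) := by
        rw [T.aux_cyc x y (T.bracket u v w), T.aux_cyc y (T.bracket u v w) x,
          T.fund u v w x y, T.aux_cyc (T.bracket v x y) w u,
          T.aux_cyc w u (T.bracket v x y), T.aux_cyc (T.bracket w x y) u v]
      rw [key]
      refine add_mem (add_mem ?_ ?_) ?_
      · refine Submodule.subset_span (Or.inr ⟨p, hp, q, hq, T.bracket u x y, ?_, v, hv, w, hw, rfl⟩)
        have := T.bracket_grade p h k u hu x hx y hy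
        rwa [mul_assoc, hhk, mul_one] at this
      · refine Submodule.subset_span (Or.inr ⟨p, hp, q, hq, u, hu, T.bracket v x y, ?_, w, hw, rfl⟩)
        have := T.bracket_grade q h k v hv x hx y hy
        rwa [mul_assoc, hhk, mul_one] at this
      · refine Submodule.subset_span (Or.inr ⟨p, hp, q, hq, u, hu, v, hv, T.bracket w x y, ?_, rfl⟩)
        have := T.bracket_grade (p * q)⁻¹ h k w hw x hx y hy
        rwa [mul_assoc, hhk, mul_one] at this
  | zero => rw [map_zero]; exact zero_mem _
  | add u v hu hv ihu ihv => rw [map_add]; exact add_mem ihu ihv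
  | smul c u hu ihu => rw [map_smul]; exact Submodule.smul_mem _ _ ihu

end GradedThreeLieRinehart

open GradedThreeLieRinehart in
/-- `[I_{[g]}, I_{[g]}, I_{[g]}] ⊆ I_{[g]}`: the subspace `I_{[g]}` is a
`3`-Lie subalgebra of `L`. -/
theorem Iclass_bracket_self {F : Type*} [Field F] {G : Type*} [CommGroup G]
    [DecidableEq G] {A : Type*} [CommRing A] [Algebra F A]
    {L : Type*} [AddCommGroup L] [Module F L] [Module A L] [IsScalarTower F A L]
    (T : GradedThreeLieRinehart F G A L) (g : G) (hg : g ∈ T.Sigma1) :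
    ∀ x ∈ T.Iclass g, ∀ y ∈ T.Iclass g, ∀ z ∈ T.Iclass g,
      T.bracket x y z ∈ T.Iclass g := by
  classical
  intro x hx y hy z hz
  set S : Set L :=
    (({x | ∃ h ∈ T.classOf g ∩ T.Lambda1, ∃ a ∈ T.Ag h⁻¹, ∃ y ∈ T.Lg h, x = a • y} ∪
      {x | ∃ h ∈ T.classOf g, ∃ k ∈ T.classOf g, ∃ y ∈ T.Lg h, ∃ z ∈ T.Lg k,
        ∃ w ∈ T.Lg (h * k)⁻¹, x = T.bracket y z w}) ∪
      (⋃ h ∈ T.classOf g, (T.Lg h : Set L))) with hSdef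
  have hVle : ∀ {d : G}, d ∈ T.classOf g → T.Lg d ≤ T.Iclass g := by
    intro d hd
    refine le_trans ?_ le_sup_right
    exact le_iSup₂ (f := fun h (_ : h ∈ T.classOf g) => T.Lg h) d hd
  have hL1le : T.L1span (T.classOf g) ≤ T.Iclass g := le_sup_left
  have hspan : T.Iclass g = Submodule.span F S := by
    rw [GradedThreeLieRinehart.Iclass]
    refine le_antisymm (sup_le ?_ ?_) ?_
    · rw [GradedThreeLieRinehart.L1span]
      exact Submodule.span_mono Set.subset_union_left
    · rw [GradedThreeLieRinehart.Vspan]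
      refine iSup₂_le fun h hh => ?_
      intro w hw
      exact Submodule.subset_span (Or.inr (Set.mem_biUnion hh hw))
    · refine Submodule.span_le.2 ?_
      rintro w (hw | hw)
      · exact Submodule.mem_sup_left (Submodule.subset_span hw)
      · rw [Set.mem_iUnion₂] at hw
        obtain ⟨h, hh, hw⟩ := hw
        exact Submodule.mem_sup_right
          ((le_iSup₂ (f := fun h (_ : h ∈ T.classOf g) => T.Lg h) h hh) hw)
  have hQ : ∀ w ∈ S, ∃ d, w ∈ T.Lg d ∧
      (d ∈ T.classOf g ∨ (d = 1 ∧ w ∈ T.L1span (T.classOf g))) := by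
    rintro w (hw | hw)
    · exact ⟨1, T.aux_L1span_le_one _ (Submodule.subset_span hw),
        Or.inr ⟨rfl, Submodule.subset_span hw⟩⟩
    · rw [Set.mem_iUnion₂] at hw
      obtain ⟨h, hh, hw⟩ := hw
      exact ⟨h, hw, Or.inl hh⟩
  have core : ∀ x y z : L,
      (∃ d, x ∈ T.Lg d ∧ (d ∈ T.classOf g ∨ (d = 1 ∧ x ∈ T.L1span (T.classOf g)))) →
      (∃ d, y ∈ T.Lg d ∧ (d ∈ T.classOf g ∨ (d = 1 ∧ y ∈ T.L1span (T.classOf g)))) →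
      (∃ d, z ∈ T.Lg d ∧ (d ∈ T.classOf g ∨ (d = 1 ∧ z ∈ T.L1span (T.classOf g)))) →
      T.bracket x y z ∈ T.Iclass g := by
    rintro x y z ⟨d₁, hx, hd₁⟩ ⟨d₂, hy, hd₂⟩ ⟨d₃, hz, hd₃⟩
    by_cases h1 : d₁ * d₂ * d₃ = 1
    · rcases hd₃ with hc₃ | ⟨rfl, hz1⟩
      · rcases hd₂ with hc₂ | ⟨rfl, hy1⟩
        · rcases hd₁ with hc₁ | ⟨rfl, hx1⟩
          · have hd3 : d₃ = (d₁ * d₂)⁻¹ := eq_inv_of_mul_eq_one_right h1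
            exact hL1le (Submodule.subset_span
              (Or.inr ⟨d₁, hc₁, d₂, hc₂, x, hx, y, hy, z, hd3 ▸ hz, rfl⟩))
          · rw [T.aux_cyc x y z]
            have h23 : d₂ * d₃ = 1 := by simpa using h1
            exact hL1le (T.aux_bracket_L1span _ h23 hy hz x hx1)
        · rw [T.aux_cyc x y z, T.aux_cyc y z x]
          have h31 : d₃ * d₁ = 1 := by rw [mul_comm]; simpa using h1
          exact hL1le (T.aux_bracket_L1span _ h31 hz hx y hy1)
      · have h12 : d₁ * d₂ = 1 := by simpa using h1
        exact hL1le (T.aux_bracket_L1span _ h12 hx hy z hz1)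
    · have hb : T.bracket x y z ∈ T.Lg (d₁ * d₂ * d₃) :=
        T.bracket_grade _ _ _ x hx y hy z hz
      by_cases hbot : T.Lg (d₁ * d₂ * d₃) = ⊥
      · rw [hbot, Submodule.mem_bot] at hb
        rw [hb]; exact zero_mem _
      · have e₁ : d₁ ∈ T.classOf g ∨ d₁ = 1 := hd₁.imp id And.left
        have e₂ : d₂ ∈ T.classOf g ∨ d₂ = 1 := hd₂.imp id And.left
        have e₃ : d₃ ∈ T.classOf g ∨ d₃ = 1 := hd₃.imp id And.left
        have hUof : ∀ d, (d ∈ T.classOf g ∨ d = 1) →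
            d ∈ T.Sigma1 ∪ T.Sigma1⁻¹ ∪ T.Lambda1 ∪ T.Lambda1⁻¹ ∪ {1} := by
          rintro d (hd | rfl)
          · exact Or.inl (Or.inl (Or.inl (Or.inl hd.1)))
          · exact Or.inr rfl
        have hconn : T.conn g (d₁ * d₂ * d₃) := by
          rcases e₁ with hc | rfl
          · exact aux_sigmaConn_trans hc.1 hc.2
              (aux_sigmaConn_step hc.1 (hUof _ e₂) (hUof _ e₃))
          · rcases e₂ with hc | rfl
            · have hrw : (1 : G) * d₂ * d₃ = d₂ * d₃ * 1 := by group
              rw [hrw]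
              exact aux_sigmaConn_trans hc.1 hc.2
                (aux_sigmaConn_step hc.1 (hUof _ e₃) (hUof _ (Or.inr rfl)))
            · rcases e₃ with hc | rfl
              · have hrw : (1 : G) * 1 * d₃ = d₃ * 1 * 1 := by group
                rw [hrw]
                exact aux_sigmaConn_trans hc.1 hc.2
                  (aux_sigmaConn_step hc.1 (hUof _ (Or.inr rfl)) (hUof _ (Or.inr rfl)))
              · exact absurd (by simp) h1
        exact hVle ⟨⟨h1, hbot⟩, hconn⟩ hb
  have H1 : ∀ x' ∈ S, ∀ y' ∈ S, ∀ w ∈ Submodule.span F S,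
      T.bracket x' y' w ∈ T.Iclass g := by
    intro x' hx' y' hy' w hw
    induction hw using Submodule.span_induction with
    | mem w' hw' => exact core _ _ _ (hQ _ hx') (hQ _ hy') (hQ _ hw')
    | zero => rw [map_zero]; exact zero_mem _
    | add u v hu hv ihu ihv => rw [map_add]; exact add_mem ihu ihv
    | smul c u hu ihu => rw [map_smul]; exact Submodule.smul_mem _ _ ihu
  have H2 : ∀ x' ∈ S, ∀ w ∈ Submodule.span F S, ∀ w' ∈ Submodule.span F S,
      T.bracket x' w w' ∈ T.Iclass g := by
    intro x' hx' w hw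
    induction hw using Submodule.span_induction with
    | mem u hu => exact H1 _ hx' _ hu
    | zero =>
      intro w' _
      have h0 : T.bracket x' 0 w' = 0 := by simp
      rw [h0]; exact zero_mem _
    | add u v hu hv ihu ihv =>
      intro w' hw'
      have hadd : T.bracket x' (u + v) w' = T.bracket x' u w' + T.bracket x' v w' := by
        simp
      rw [hadd]; exact add_mem (ihu w' hw') (ihv w' hw')
    | smul c u hu ihu =>
      intro w' hw'
      have hsmul : T.bracket x' (c • u) w' = c • T.bracket x' u w' := by simp
      rw [hsmul]; exact Submodule.smul_mem _ _ (ihu w' hw')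
  have H3 : ∀ w ∈ Submodule.span F S, ∀ u ∈ Submodule.span F S,
      ∀ v ∈ Submodule.span F S, T.bracket w u v ∈ T.Iclass g := by
    intro w hw
    induction hw using Submodule.span_induction with
    | mem u hu => exact H2 _ hu
    | zero =>
      intro u _ v _
      have h0 : T.bracket 0 u v = 0 := by simp
      rw [h0]; exact zero_mem _
    | add a b ha hb iha ihb =>
      intro u hu v hv
      have hadd : T.bracket (a + b) u v = T.bracket a u v + T.bracket b u v := by simp
      rw [hadd]; exact add_mem (iha u hu v hv) (ihb u hu v hv)
    | smul c a ha iha =>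
      intro u hu v hv
      have hsmul : T.bracket (c • a) u v = c • T.bracket a u v := by simp
      rw [hsmul]; exact Submodule.smul_mem _ _ (iha u hu v hv)
  rw [hspan] at hx hy hz
  exact H3 x hx y hy z hz
end

section
/- Let (L, A) be a G-graded 3-Lie-Rinehart algebra. For a Λ¹-connection class [λ], define A_{1,[λ]} = Σ_{μ∈[λ]} A_{μ^{-1}}A_μ + Σ_{h,k∈[λ]∩Σ¹} ρ(L_h,L_k)(A_{(hk)^{-1}}) ⊆ A_1, A_{[λ]} = ⊕_{μ∈[λ]} A_μ, and 𝒜_{[λ]} = A_{1,[λ]} ⊕ A_{[λ]}. Then 𝒜_{[λ]} 𝒜_{[λ]} ⊆ 𝒜_{[λ]}, i.e. 𝒜_{[λ]} is a subalgebra of A. -/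
section AuxConn

variable {G : Type*} [CommGroup G]

private lemma mem_S_inv {Sig Lam : Set G} {s : G}
    (hs : s ∈ Sig ∪ Sig⁻¹ ∪ Lam ∪ Lam⁻¹ ∪ {1}) :
    s⁻¹ ∈ Sig ∪ Sig⁻¹ ∪ Lam ∪ Lam⁻¹ ∪ {1} := by
  simp only [Set.mem_union, Set.mem_inv, Set.mem_singleton_iff, inv_inv, inv_eq_one] at *
  tauto

private lemma mem_LL_inv {Lam : Set G} {s : G} (hs : s ∈ Lam ∪ Lam⁻¹) :
    s⁻¹ ∈ Lam ∪ Lam⁻¹ := by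
  simp only [Set.mem_union, Set.mem_inv, inv_inv] at *
  tauto

private lemma prod_concat (n q : ℕ) (f g : ℕ → G) (φ : G →* G) :
    (∏ i ∈ Finset.range (n + q), (if i < n then f i else φ (g (i - n + 1)))) =
      (∏ i ∈ Finset.range n, f i) * φ ((∏ i ∈ Finset.range (q + 1), g i) * (g 0)⁻¹) := by
  rw [Finset.prod_range_add]
  congr 1
  · exact Finset.prod_congr rfl fun i hi => if_pos (Finset.mem_range.1 hi)
  · have h1 : (∏ i ∈ Finset.range q,
        (if n + i < n then f (n + i) else φ (g (n + i - n + 1)))) =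
        ∏ i ∈ Finset.range q, φ (g (i + 1)) := by
      refine Finset.prod_congr rfl fun i _ => ?_
      rw [if_neg (by omega)]
      congr 2
      omega
    rw [h1, ← map_prod]
    congr 1
    rw [Finset.prod_range_succ']
    group

private lemma lambdaConn_trans_aux {Sig Lam : Set G} {l μ x : G} (hμ : μ ∈ Lam)
    (φ : G →* G) (hφ : ∀ y : G, φ y = y ∨ φ y = y⁻¹)
    {n : ℕ} {f : ℕ → G} (hn : 1 ≤ n) (hf0 : f 0 = l)
    (hfS : ∀ i < n, f i ∈ Sig ∪ Sig⁻¹ ∪ Lam ∪ Lam⁻¹ ∪ {1})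
    (hfP : ∀ k, 2 ≤ k → k < n → (∏ i ∈ Finset.range k, f i) ∈ Lam ∪ Lam⁻¹)
    (hfT : (∏ i ∈ Finset.range n, f i) = φ μ)
    (h2 : LambdaConn Sig Lam μ x) :
    LambdaConn Sig Lam l x := by
  obtain ⟨p, g, hp, hg0, hgS, hgP, hgT⟩ := h2
  refine ⟨n + (p - 1), fun i => if i < n then f i else φ (g (i - n + 1)),
    by omega, ?_, ?_, ?_, ?_⟩
  · simp only [if_pos (by omega : 0 < n)]
    exact hf0
  · intro i hi
    by_cases h : i < n
    · simpa [h] using hfS i h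
    · simp only [if_neg h]
      rcases hφ (g (i - n + 1)) with he | he <;> rw [he]
      · exact hgS _ (by omega)
      · exact mem_S_inv (hgS _ (by omega))
  · intro k h2k hkN
    rcases lt_or_ge k n with hkn | hkn
    · have hk : (∏ i ∈ Finset.range k, (if i < n then f i else φ (g (i - n + 1)))) =
          ∏ i ∈ Finset.range k, f i :=
        Finset.prod_congr rfl fun i hi => if_pos (by
          have := Finset.mem_range.1 hi; omega)
      rw [hk]
      exact hfP k h2k hkn
    · rcases eq_or_lt_of_le hkn with hkn' | hkn'
      · subst hkn'
        have hk : (∏ i ∈ Finset.range n, (if i < n then f i else φ (g (i - n + 1)))) =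
            ∏ i ∈ Finset.range n, f i :=
          Finset.prod_congr rfl fun i hi => if_pos (Finset.mem_range.1 hi)
        rw [hk, hfT]
        rcases hφ μ with he | he <;> rw [he]
        · exact Or.inl hμ
        · exact Or.inr (Set.inv_mem_inv.2 hμ)
      · rw [show k = n + (k - n) from by omega, prod_concat, hfT, hg0]
        have hmem := hgP (k - n + 1) (by omega) (by omega)
        have he : φ μ * φ ((∏ i ∈ Finset.range (k - n + 1), g i) * μ⁻¹) =
            φ (∏ i ∈ Finset.range (k - n + 1), g i) := by
          rw [← map_mul]
          congr 1
          rw [mul_comm μ, inv_mul_cancel_right]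
        rw [he]
        rcases hφ (∏ i ∈ Finset.range (k - n + 1), g i) with h' | h' <;> rw [h']
        · exact hmem
        · exact mem_LL_inv hmem
  · have hT : (∏ i ∈ Finset.range (n + (p - 1)),
        (if i < n then f i else φ (g (i - n + 1)))) =
        φ (∏ i ∈ Finset.range p, g i) := by
      rw [prod_concat, hfT, hg0, show p - 1 + 1 = p from by omega, ← map_mul]
      congr 1
      rw [mul_comm μ, inv_mul_cancel_right]
    rw [hT]
    rcases hgT with he | he <;> rw [he] <;> rcases hφ x with h' | h'
    · exact Or.inl h'
    · exact Or.inr h'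
    · rcases hφ x⁻¹ with h'' | h''
      · exact Or.inr h''
      · exact Or.inl (by rw [h'', inv_inv])
    · rcases hφ x⁻¹ with h'' | h''
      · exact Or.inr h''
      · exact Or.inl (by rw [h'', inv_inv])

private lemma lambdaConn_trans {Sig Lam : Set G} {l μ x : G} (hμ : μ ∈ Lam)
    (h1 : LambdaConn Sig Lam l μ) (h2 : LambdaConn Sig Lam μ x) :
    LambdaConn Sig Lam l x := by
  obtain ⟨n, f, hn, hf0, hfS, hfP, hfT⟩ := h1
  rcases hfT with hT | hT
  · exact lambdaConn_trans_aux hμ (MonoidHom.id G) (fun y => Or.inl rfl) hn hf0 hfS hfP hT h2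
  · exact lambdaConn_trans_aux hμ (invMonoidHom : G →* G) (fun y => Or.inr rfl)
      hn hf0 hfS hfP hT h2

private lemma lambdaConn_step {Sig Lam : Set G} {μ ν : G} (hμ : μ ∈ Lam) (hν : ν ∈ Lam) :
    LambdaConn Sig Lam μ (μ * ν) := by
  refine ⟨2, fun i => if i = 0 then μ else if i = 1 then ν else 1,
    one_le_two, rfl, ?_, ?_, Or.inl ?_⟩
  · intro i hi
    interval_cases i <;> simp [Set.mem_union, hμ, hν]
  · intro k hk2 hk
    omega
  · simp [Finset.prod_range_succ]

end AuxConn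

section AuxGraded

open GradedThreeLieRinehart

variable {F : Type*} [Field F] {G : Type*} [CommGroup G] [DecidableEq G]
  {A : Type*} [CommRing A] [Algebra F A]
  {L : Type*} [AddCommGroup L] [Module F L] [Module A L] [IsScalarTower F A L]

private lemma A1span_le_Ag_one (T : GradedThreeLieRinehart F G A L) (C : Set G) :
    T.A1span C ≤ T.Ag 1 := by
  refine Submodule.span_le.2 ?_
  rintro x (⟨m, hm, a, ha, b, hb, rfl⟩ | ⟨h, hh, k, hk, y, hy, z, hz, a, ha, rfl⟩)
  · have := T.mul_grade _ _ a ha b hb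
    rwa [inv_mul_cancel] at this
  · have := T.rho_grade _ _ _ y hy z hz a ha
    rwa [mul_inv_cancel] at this

private lemma mul_A1span (T : GradedThreeLieRinehart F G A L) (C : Set G)
    {x c : A} (hx : x ∈ T.A1span C) (hc : c ∈ T.Ag 1) : x * c ∈ T.A1span C := by
  have hle : T.A1span C ≤ Submodule.comap (LinearMap.mulRight F c) (T.A1span C) := by
    refine Submodule.span_le.2 ?_
    rintro x (⟨m, hm, a, ha, b, hb, rfl⟩ | ⟨h, hh, k, hk, y, hy, z, hz, a, ha, rfl⟩)
    · have hbc : b * c ∈ T.Ag m := by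
        have := T.mul_grade m 1 b hb c hc
        rwa [mul_one] at this
      refine Submodule.mem_comap.2 ?_
      have heq : (LinearMap.mulRight F c) (a * b) = a * (b * c) := by
        simp [LinearMap.mulRight_apply, mul_assoc]
      rw [heq]
      exact Submodule.subset_span (Or.inl ⟨m, hm, a, ha, b * c, hbc, rfl⟩)
    · have hcy : c • y ∈ T.Lg h := by
        have := T.smul_grade 1 h c hc y hy
        rwa [one_mul] at this
      refine Submodule.mem_comap.2 ?_
      have heq : (LinearMap.mulRight F c) (T.rho y z a) = T.rho (c • y) z a := by
        rw [T.rho_smul_left]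
        simp [LinearMap.mulRight_apply, LinearMap.smul_apply, smul_eq_mul, mul_comm]
      rw [heq]
      exact Submodule.subset_span (Or.inr ⟨h, hh, k, hk, c • y, hcy, z, hz, a, ha, rfl⟩)
  exact hle hx

private lemma Ag_le_AVspan (T : GradedThreeLieRinehart F G A L) {C : Set G} {m : G}
    (hm : m ∈ C) : T.Ag m ≤ T.AVspan C :=
  le_iSup₂ (f := fun m (_ : m ∈ C) => T.Ag m) m hm

private lemma mul_AVspan (T : GradedThreeLieRinehart F G A L) (C : Set G)
    {v c : A} (hv : v ∈ T.AVspan C) (hc : c ∈ T.Ag 1) : v * c ∈ T.AVspan C := by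
  have hle : T.AVspan C ≤ Submodule.comap (LinearMap.mulRight F c) (T.AVspan C) := by
    refine iSup₂_le fun m hm => fun x hx => ?_
    refine Submodule.mem_comap.2 ?_
    have hxc : x * c ∈ T.Ag m := by
      have := T.mul_grade m 1 x hx c hc
      rwa [mul_one] at this
    exact Ag_le_AVspan T hm hxc
  exact hle hv

private lemma AV_mul_AV (T : GradedThreeLieRinehart F G A L) {l : G}
    {v w : A} (hv : v ∈ T.AVspan (T.classOfA l)) (hw : w ∈ T.AVspan (T.classOfA l)) :
    v * w ∈ T.Aclass l := by
  suffices H : ∀ μ ∈ T.classOfA l, ∀ v ∈ T.Ag μ, ∀ w ∈ T.AVspan (T.classOfA l),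
      v * w ∈ T.Aclass l by
    have hle : T.AVspan (T.classOfA l) ≤
        Submodule.comap (LinearMap.mulRight F w) (T.Aclass l) :=
      iSup₂_le fun μ hμ => fun x hx => Submodule.mem_comap.2 (H μ hμ x hx w hw)
    exact hle hv
  intro μ hμ v hv w' hw'
  have hle : T.AVspan (T.classOfA l) ≤
      Submodule.comap (LinearMap.mulLeft F v) (T.Aclass l) := by
    refine iSup₂_le fun ν hν => fun w hw => Submodule.mem_comap.2 ?_
    obtain ⟨hμ1, hμ2⟩ := hμ
    obtain ⟨hν1, hν2⟩ := hν
    show v * w ∈ T.Aclass l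
    by_cases hone : μ * ν = 1
    · have hν' : ν = μ⁻¹ := eq_inv_of_mul_eq_one_right hone
      refine Submodule.mem_sup_left (Submodule.subset_span (Or.inl
        ⟨μ, ⟨hμ1, hμ2⟩, w, ?_, v, hv, mul_comm v w⟩))
      rw [← hν']
      exact hw
    · have hvw : v * w ∈ T.Ag (μ * ν) := T.mul_grade _ _ v hv w hw
      by_cases hbot : T.Ag (μ * ν) = ⊥
      · rw [hbot, Submodule.mem_bot] at hvw
        rw [hvw]
        exact zero_mem _
      · have hμν : μ * ν ∈ T.classOfA l := by
          refine ⟨⟨hone, hbot⟩, ?_⟩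
          exact lambdaConn_trans hμ1 hμ2 (lambdaConn_step hμ1 hν1)
        exact Submodule.mem_sup_right (Ag_le_AVspan T hμν hvw)
  exact hle hw'

end AuxGraded

open GradedThreeLieRinehart in
/-- `𝒜_{[λ]} 𝒜_{[λ]} ⊆ 𝒜_{[λ]}`: each `𝒜_{[λ]}` is a subalgebra of `A`. -/
theorem Aclass_mul_self {F : Type*} [Field F] {G : Type*} [CommGroup G]
    [DecidableEq G] {A : Type*} [CommRing A] [Algebra F A]
    {L : Type*} [AddCommGroup L] [Module F L] [Module A L] [IsScalarTower F A L]
    (T : GradedThreeLieRinehart F G A L) (l : G) (hl : l ∈ T.Lambda1) :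
    ∀ a ∈ T.Aclass l, ∀ b ∈ T.Aclass l, a * b ∈ T.Aclass l := by
  intro a ha b hb
  obtain ⟨a1, ha1, a2, ha2, rfl⟩ := Submodule.mem_sup.1 ha
  obtain ⟨b1, hb1, b2, hb2, rfl⟩ := Submodule.mem_sup.1 hb
  have h11 : a1 * b1 ∈ T.Aclass l :=
    Submodule.mem_sup_left (mul_A1span T _ ha1 (A1span_le_Ag_one T _ hb1))
  have h12 : a1 * b2 ∈ T.Aclass l := by
    rw [mul_comm]
    exact Submodule.mem_sup_right (mul_AVspan T _ hb2 (A1span_le_Ag_one T _ ha1))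
  have h21 : a2 * b1 ∈ T.Aclass l :=
    Submodule.mem_sup_right (mul_AVspan T _ ha2 (A1span_le_Ag_one T _ hb1))
  have h22 : a2 * b2 ∈ T.Aclass l := AV_mul_AV T ha2 hb2
  have hexp : (a1 + a2) * (b1 + b2) = a1 * b1 + a1 * b2 + a2 * b1 + a2 * b2 := by ring
  rw [hexp]
  exact add_mem (add_mem (add_mem h11 h12) h21) h22
end

section
/- Let (L, A) be a G-graded 3-Lie-Rinehart algebra and let [λ] ≠ [μ] be distinct Λ¹-connection classes. Then 𝒜_{[λ]} 𝒜_{[μ]} = 0, where 𝒜_{[λ]} = A_{1,[λ]} ⊕ A_{[λ]} is the ideal of A associated to [λ]. -/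
section ConnLemmas
variable {G : Type*} [CommGroup G] {Sig Lam : Set G}

lemma allowed_inv {x : G} (h : x ∈ Sig ∪ Sig⁻¹ ∪ Lam ∪ Lam⁻¹ ∪ ({1} : Set G)) :
    x⁻¹ ∈ Sig ∪ Sig⁻¹ ∪ Lam ∪ Lam⁻¹ ∪ ({1} : Set G) := by
  simp only [Set.mem_union, Set.mem_inv, Set.mem_singleton_iff, inv_inv, inv_eq_one] at h ⊢
  tauto

lemma lamlam_inv {x : G} (h : x ∈ Lam ∪ Lam⁻¹) : x⁻¹ ∈ Lam ∪ Lam⁻¹ := by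
  simp only [Set.mem_union, Set.mem_inv, inv_inv] at h ⊢
  tauto

lemma lambdaConn_inv {l p : G} (h : LambdaConn Sig Lam l p) : LambdaConn Sig Lam l p⁻¹ := by
  obtain ⟨n, f, h1, h0, hU, hI, hF⟩ := h
  refine ⟨n, f, h1, h0, hU, hI, ?_⟩
  rcases hF with hF | hF
  · exact Or.inr (by rw [inv_inv]; exact hF)
  · exact Or.inl hF

lemma lambdaConn_append {l p e : G} (h : LambdaConn Sig Lam l p)
    (hp : p ∈ Lam ∪ Lam⁻¹) (he : e ∈ Sig ∪ Sig⁻¹ ∪ Lam ∪ Lam⁻¹ ∪ ({1} : Set G)) :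
    LambdaConn Sig Lam l (p * e) := by
  obtain ⟨n, f, h1, h0, hU, hI, hF⟩ := h
  rcases hF with hF | hF
  · refine ⟨n + 1, fun i => if i = n then e else f i, by omega, ?_, ?_, ?_, ?_⟩
    · simp only [if_neg (by omega : (0:ℕ) ≠ n)]; exact h0
    · intro i hi
      by_cases h' : i = n
      · simpa [h'] using he
      · simpa [h'] using hU i (by omega)
    · intro k h2 hk
      have hprod : (∏ i ∈ Finset.range k, if i = n then e else f i) = ∏ i ∈ Finset.range k, f i :=
        Finset.prod_congr rfl fun i hi => if_neg (by have := Finset.mem_range.mp hi; omega)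
      rw [hprod]
      rcases Nat.lt_succ_iff_lt_or_eq.mp hk with hk' | hk'
      · exact hI k h2 hk'
      · rw [hk', hF]; exact hp
    · left
      rw [Finset.prod_range_succ, if_pos rfl]
      have hprod : (∏ i ∈ Finset.range n, if i = n then e else f i) = ∏ i ∈ Finset.range n, f i :=
        Finset.prod_congr rfl fun i hi => if_neg (by have := Finset.mem_range.mp hi; omega)
      rw [hprod, hF]
  · refine ⟨n + 1, fun i => if i = n then e⁻¹ else f i, by omega, ?_, ?_, ?_, ?_⟩
    · simp only [if_neg (by omega : (0:ℕ) ≠ n)]; exact h0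
    · intro i hi
      by_cases h' : i = n
      · simpa [h'] using allowed_inv he
      · simpa [h'] using hU i (by omega)
    · intro k h2 hk
      have hprod : (∏ i ∈ Finset.range k, if i = n then e⁻¹ else f i) = ∏ i ∈ Finset.range k, f i :=
        Finset.prod_congr rfl fun i hi => if_neg (by have := Finset.mem_range.mp hi; omega)
      rw [hprod]
      rcases Nat.lt_succ_iff_lt_or_eq.mp hk with hk' | hk'
      · exact hI k h2 hk'
      · rw [hk', hF]; exact lamlam_inv hp
    · right
      rw [Finset.prod_range_succ, if_pos rfl]
      have hprod : (∏ i ∈ Finset.range n, if i = n then e⁻¹ else f i) = ∏ i ∈ Finset.range n, f i :=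
        Finset.prod_congr rfl fun i hi => if_neg (by have := Finset.mem_range.mp hi; omega)
      rw [hprod, hF, mul_inv]

lemma lambdaConn_symm {l p : G} (h : LambdaConn Sig Lam l p)
    (hp : p ∈ Sig ∪ Sig⁻¹ ∪ Lam ∪ Lam⁻¹ ∪ ({1} : Set G)) : LambdaConn Sig Lam p l := by
  obtain ⟨n, f, h1, h0, hU, hI, hF⟩ := h
  rcases hF with hF | hF
  · set g : ℕ → G := fun j => if j = 0 then p else (f (n - j))⁻¹ with hg
    have key : ∀ k, 1 ≤ k → k ≤ n →
        (∏ j ∈ Finset.range k, g j) = ∏ i ∈ Finset.range (n - k + 1), f i := by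
      intro k
      induction k with
      | zero => omega
      | succ k ih =>
        intro _ hk2
        by_cases hk0 : k = 0
        · subst hk0
          rw [Finset.prod_range_one, show g 0 = p from if_pos rfl,
            show n - 1 + 1 = n by omega]
          exact hF.symm
        · rw [Finset.prod_range_succ, ih (by omega) (by omega),
            show n - (k + 1) + 1 = n - k by omega, Finset.prod_range_succ,
            show g k = (f (n - k))⁻¹ from if_neg hk0, mul_inv_cancel_right]
    refine ⟨n, g, h1, if_pos rfl, ?_, ?_, ?_⟩
    · intro i hi
      by_cases hi0 : i = 0
      · simpa [hg, hi0] using hp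
      · simp only [hg, if_neg hi0]
        exact allowed_inv (hU (n - i) (by omega))
    · intro k h2 hk
      rw [key k (by omega) (by omega)]
      exact hI (n - k + 1) (by omega) (by omega)
    · left
      rw [key n h1 le_rfl, show n - n + 1 = 1 by omega, Finset.prod_range_one, h0]
  · set g : ℕ → G := fun j => if j = 0 then p else f (n - j) with hg
    have key : ∀ k, 1 ≤ k → k ≤ n →
        (∏ j ∈ Finset.range k, g j) = (∏ i ∈ Finset.range (n - k + 1), f i)⁻¹ := by
      intro k
      induction k with
      | zero => omega
      | succ k ih =>
        intro _ hk2
        by_cases hk0 : k = 0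
        · subst hk0
          rw [Finset.prod_range_one, show g 0 = p from if_pos rfl,
            show n - 1 + 1 = n by omega, hF, inv_inv]
        · rw [Finset.prod_range_succ, ih (by omega) (by omega),
            show n - (k + 1) + 1 = n - k by omega, Finset.prod_range_succ, mul_inv,
            show g k = f (n - k) from if_neg hk0, inv_mul_cancel_right]
    refine ⟨n, g, h1, if_pos rfl, ?_, ?_, ?_⟩
    · intro i hi
      by_cases hi0 : i = 0
      · simpa [hg, hi0] using hp
      · simp only [hg, if_neg hi0]
        exact hU (n - i) (by omega)
    · intro k h2 hk
      rw [key k (by omega) (by omega)]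
      exact lamlam_inv (hI (n - k + 1) (by omega) (by omega))
    · right
      rw [key n h1 le_rfl, show n - n + 1 = 1 by omega, Finset.prod_range_one, h0]

lemma lambdaConn_trans_s15 {l p q : G} (h1c : LambdaConn Sig Lam l p) (h2c : LambdaConn Sig Lam p q)
    (hp : p ∈ Lam ∪ Lam⁻¹) : LambdaConn Sig Lam l q := by
  obtain ⟨n, f, hn, hf0, hfU, hfI, hfF⟩ := h1c
  obtain ⟨n', g, hn', hg0, hgU, hgI, hgF⟩ := h2c
  rcases hfF with hfF | hfF
  · set Fc : ℕ → G := fun i => if i < n then f i else g (i - n + 1) with hFc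
    have key : ∀ k, n ≤ k → k ≤ n + n' - 1 →
        (∏ i ∈ Finset.range k, Fc i) = ∏ j ∈ Finset.range (k - n + 1), g j := by
      intro k hk
      induction k, hk using Nat.le_induction with
      | base =>
        intro _
        have h' : (∏ i ∈ Finset.range n, Fc i) = ∏ i ∈ Finset.range n, f i :=
          Finset.prod_congr rfl fun i hi => if_pos (Finset.mem_range.mp hi)
        rw [h', hfF, show n - n + 1 = 1 by omega, Finset.prod_range_one, hg0]
      | succ k hk ih =>
        intro hk2
        have hFk : Fc k = g (k - n + 1) := if_neg (by omega)
        rw [Finset.prod_range_succ Fc k, hFk, ih (by omega),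
          show k + 1 - n + 1 = (k - n + 1) + 1 by omega, Finset.prod_range_succ g (k - n + 1)]
    refine ⟨n + n' - 1, Fc, by omega, ?_, ?_, ?_, ?_⟩
    · simp only [hFc, if_pos (show 0 < n by omega)]; exact hf0
    · intro i hi
      by_cases h' : i < n
      · simpa [hFc, h'] using hfU i h'
      · simp only [hFc, if_neg h']
        exact hgU _ (by omega)
    · intro k h2 hk
      by_cases hkn : k < n
      · have h' : (∏ i ∈ Finset.range k, Fc i) = ∏ i ∈ Finset.range k, f i :=
          Finset.prod_congr rfl fun i hi => if_pos (by have := Finset.mem_range.mp hi; omega)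
        rw [h']; exact hfI k h2 hkn
      · rcases Nat.eq_or_lt_of_le (not_lt.mp hkn) with hkn' | hkn'
        · rw [key k (by omega) (by omega), show k - n + 1 = 1 by omega,
            Finset.prod_range_one, hg0]
          exact hp
        · rw [key k (by omega) (by omega)]
          exact hgI (k - n + 1) (by omega) (by omega)
    · rw [key (n + n' - 1) (by omega) le_rfl, show n + n' - 1 - n + 1 = n' by omega]
      exact hgF
  · set Fc : ℕ → G := fun i => if i < n then f i else (g (i - n + 1))⁻¹ with hFc
    have key : ∀ k, n ≤ k → k ≤ n + n' - 1 →
        (∏ i ∈ Finset.range k, Fc i) = (∏ j ∈ Finset.range (k - n + 1), g j)⁻¹ := by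
      intro k hk
      induction k, hk using Nat.le_induction with
      | base =>
        intro _
        have h' : (∏ i ∈ Finset.range n, Fc i) = ∏ i ∈ Finset.range n, f i :=
          Finset.prod_congr rfl fun i hi => if_pos (Finset.mem_range.mp hi)
        rw [h', hfF, show n - n + 1 = 1 by omega, Finset.prod_range_one, hg0]
      | succ k hk ih =>
        intro hk2
        have hFk : Fc k = (g (k - n + 1))⁻¹ := if_neg (by omega)
        rw [Finset.prod_range_succ Fc k, hFk, ih (by omega),
          show k + 1 - n + 1 = (k - n + 1) + 1 by omega,
          Finset.prod_range_succ g (k - n + 1), mul_inv]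
    refine ⟨n + n' - 1, Fc, by omega, ?_, ?_, ?_, ?_⟩
    · simp only [hFc, if_pos (show 0 < n by omega)]; exact hf0
    · intro i hi
      by_cases h' : i < n
      · simpa [hFc, h'] using hfU i h'
      · simp only [hFc, if_neg h']
        exact allowed_inv (hgU _ (by omega))
    · intro k h2 hk
      by_cases hkn : k < n
      · have h' : (∏ i ∈ Finset.range k, Fc i) = ∏ i ∈ Finset.range k, f i :=
          Finset.prod_congr rfl fun i hi => if_pos (by have := Finset.mem_range.mp hi; omega)
        rw [h']; exact hfI k h2 hkn
      · rcases Nat.eq_or_lt_of_le (not_lt.mp hkn) with hkn' | hkn'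
        · rw [key k (by omega) (by omega), show k - n + 1 = 1 by omega,
            Finset.prod_range_one, hg0]
          exact lamlam_inv hp
        · rw [key k (by omega) (by omega)]
          exact lamlam_inv (hgI (k - n + 1) (by omega) (by omega))
    · rw [key (n + n' - 1) (by omega) le_rfl, show n + n' - 1 - n + 1 = n' by omega]
      rcases hgF with hgF | hgF
      · exact Or.inr (by rw [hgF])
      · exact Or.inl (by rw [hgF, inv_inv])

end ConnLemmas

namespace GradedThreeLieRinehart

section Aux
variable {F : Type*} [Field F] {G : Type*} [CommGroup G] [DecidableEq G]
  {A : Type*} [CommRing A] [Algebra F A]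
  {L : Type*} [AddCommGroup L] [Module F L] [Module A L] [IsScalarTower F A L]
  (T : GradedThreeLieRinehart F G A L) {l m : G}

/-- If `l` and `m` have a common `Λ¹`-connection point lying in `Λ¹`, their classes agree. -/
lemma no_common (hl : l ∈ T.Lambda1) (hm : m ∈ T.Lambda1)
    (hne : T.classOfA l ≠ T.classOfA m) (p : G) (hpΛ : p ∈ T.Lambda1)
    (h1 : T.connA l p) (h2 : T.connA m p) : False := by
  apply hne
  have hpU : p ∈ T.Sigma1 ∪ T.Sigma1⁻¹ ∪ T.Lambda1 ∪ T.Lambda1⁻¹ ∪ ({1} : Set G) :=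
    Or.inl (Or.inl (Or.inr hpΛ))
  have hml : LambdaConn T.Sigma1 T.Lambda1 m l :=
    lambdaConn_trans_s15 h2 (lambdaConn_symm h1 hpU) (Or.inl hpΛ)
  have hlm : LambdaConn T.Sigma1 T.Lambda1 l m :=
    lambdaConn_trans_s15 h1 (lambdaConn_symm h2 hpU) (Or.inl hpΛ)
  ext q
  simp only [classOfA, Set.mem_setOf_eq]
  constructor
  · rintro ⟨hq, hcq⟩
    exact ⟨hq, lambdaConn_trans_s15 hml hcq (Or.inl hl)⟩
  · rintro ⟨hq, hcq⟩
    exact ⟨hq, lambdaConn_trans_s15 hlm hcq (Or.inl hm)⟩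

/-- No nontrivial homogeneous component can exist in degree `p * q` or `p * q⁻¹`
where `p` is `Λ¹`-connected to `l` and `q` to `m`. -/
lemma not_exists_aux (hl : l ∈ T.Lambda1) (hm : m ∈ T.Lambda1)
    (hne : T.classOfA l ≠ T.classOfA m) (p q r : G)
    (hpΛ : p ∈ T.Lambda1) (hqΛ : q ∈ T.Lambda1)
    (hcp : T.connA l p) (hcq : T.connA m q)
    (hr : r = p * q ∨ r = p * q⁻¹)
    (hmem : r ∈ T.Sigma1 ∨ r ∈ T.Lambda1 ∨ r = 1) : False := by
  by_cases hr1 : r = 1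
  · subst hr1
    rcases hr with hr | hr
    · have hq' : q = p⁻¹ := eq_inv_of_mul_eq_one_left (by rw [mul_comm]; exact hr.symm)
      exact no_common T hl hm hne q hqΛ (hq' ▸ lambdaConn_inv hcp) hcq
    · have hpq : p = q := mul_inv_eq_one.mp hr.symm
      exact no_common T hl hm hne q hqΛ (hpq ▸ hcp) hcq
  · have hrU : r ∈ T.Sigma1 ∪ T.Sigma1⁻¹ ∪ T.Lambda1 ∪ T.Lambda1⁻¹ ∪ ({1} : Set G) := by
      rcases hmem with hmem | hmem | hmem
      · exact Or.inl (Or.inl (Or.inl (Or.inl hmem)))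
      · exact Or.inl (Or.inl (Or.inr hmem))
      · exact absurd hmem hr1
    have happ : LambdaConn T.Sigma1 T.Lambda1 l (p * r⁻¹) :=
      lambdaConn_append hcp (Or.inl hpΛ) (allowed_inv hrU)
    rcases hr with rfl | rfl
    · have he : p * (p * q)⁻¹ = q⁻¹ := by
        rw [mul_inv_rev, mul_comm q⁻¹ p⁻¹, mul_inv_cancel_left]
      rw [he] at happ
      have hq' : T.connA l q := by
        have := lambdaConn_inv happ
        rwa [inv_inv] at this
      exact no_common T hl hm hne q hqΛ hq' hcq
    · have he : p * (p * q⁻¹)⁻¹ = q := by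
        rw [mul_inv_rev, inv_inv, mul_comm q p⁻¹, mul_inv_cancel_left]
      rw [he] at happ
      exact no_common T hl hm hne q hqΛ happ hcq

lemma Ag_bot (hl : l ∈ T.Lambda1) (hm : m ∈ T.Lambda1)
    (hne : T.classOfA l ≠ T.classOfA m) (p q r : G)
    (hpΛ : p ∈ T.Lambda1) (hqΛ : q ∈ T.Lambda1)
    (hcp : T.connA l p) (hcq : T.connA m q)
    (hr : r = p * q ∨ r = p * q⁻¹) : T.Ag r = ⊥ := by
  by_contra hbot
  refine not_exists_aux T hl hm hne p q r hpΛ hqΛ hcp hcq hr ?_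
  by_cases h1 : r = 1
  · exact Or.inr (Or.inr h1)
  · exact Or.inr (Or.inl ⟨h1, hbot⟩)

lemma Lg_bot (hl : l ∈ T.Lambda1) (hm : m ∈ T.Lambda1)
    (hne : T.classOfA l ≠ T.classOfA m) (p q r : G)
    (hpΛ : p ∈ T.Lambda1) (hqΛ : q ∈ T.Lambda1)
    (hcp : T.connA l p) (hcq : T.connA m q)
    (hr : r = p * q ∨ r = p * q⁻¹) : T.Lg r = ⊥ := by
  by_contra hbot
  refine not_exists_aux T hl hm hne p q r hpΛ hqΛ hcp hcq hr ?_
  by_cases h1 : r = 1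
  · exact Or.inr (Or.inr h1)
  · exact Or.inl ⟨h1, hbot⟩

lemma mul_zero_of_bot {g g' : G} {a b : A} (ha : a ∈ T.Ag g) (hb : b ∈ T.Ag g')
    (h : T.Ag (g * g') = ⊥) : a * b = 0 := by
  have := T.mul_grade g g' a ha b hb
  rw [h] at this
  simpa using this

lemma smul_zero_of_bot {g g' : G} {a : A} {x : L} (ha : a ∈ T.Ag g) (hx : x ∈ T.Lg g')
    (h : T.Lg (g * g') = ⊥) : a • x = 0 := by
  have := T.smul_grade g g' a ha x hx
  rw [h] at this
  simpa using this

lemma rho_zero_of_bot {g g' g'' : G} {x y : L} {a : A} (hx : x ∈ T.Lg g) (hy : y ∈ T.Lg g')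
    (ha : a ∈ T.Ag g'') (h : T.Ag (g * g' * g'') = ⊥) : T.rho x y a = 0 := by
  have := T.rho_grade g g' g'' x hx y hy a ha
  rw [h] at this
  simpa using this

/-- Homogeneous × homogeneous. -/
lemma hom_hom (hl : l ∈ T.Lambda1) (hm : m ∈ T.Lambda1)
    (hne : T.classOfA l ≠ T.classOfA m) {ν η : G}
    (hν : ν ∈ T.Lambda1) (hcν : T.connA l ν) (hη : η ∈ T.Lambda1) (hcη : T.connA m η)
    {a b : A} (ha : a ∈ T.Ag ν) (hb : b ∈ T.Ag η) : a * b = 0 :=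
  mul_zero_of_bot T ha hb
    (Ag_bot T hl hm hne ν η (ν * η) hν hη hcν hcη (Or.inl rfl))

/-- Homogeneous × `ρ`-generator. -/
lemma hom_rho (hl : l ∈ T.Lambda1) (hm : m ∈ T.Lambda1)
    (hne : T.classOfA l ≠ T.classOfA m) {ν h' k' : G}
    (hν : ν ∈ T.Lambda1) (hcν : T.connA l ν)
    (hh' : h' ∈ T.classOfA m) (hk' : k' ∈ T.classOfA m)
    {x' y' : L} {c' : A} (hx' : x' ∈ T.Lg h') (hy' : y' ∈ T.Lg k')
    (hc' : c' ∈ T.Ag (h' * k')⁻¹)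
    {a : A} (ha : a ∈ T.Ag ν) : a * T.rho x' y' c' = 0 := by
  have hax : a • x' = 0 := smul_zero_of_bot T ha hx'
    (Lg_bot T hl hm hne ν h' (ν * h') hν hh'.1 hcν hh'.2 (Or.inl rfl))
  have key := congrArg (fun f : Module.End F A => f c') (T.rho_smul_left a x' y')
  simp only [LinearMap.smul_apply, smul_eq_mul] at key
  rw [← key, hax]
  simp

/-- `ρ`-generator × homogeneous. -/
lemma rho_hom (hl : l ∈ T.Lambda1) (hm : m ∈ T.Lambda1)
    (hne : T.classOfA l ≠ T.classOfA m) {h k η : G}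
    (hh : h ∈ T.classOfA l) (hk : k ∈ T.classOfA l)
    (hη : η ∈ T.Lambda1) (hcη : T.connA m η)
    {x y : L} {c : A} (hx : x ∈ T.Lg h) (hy : y ∈ T.Lg k) (hc : c ∈ T.Ag (h * k)⁻¹)
    {b : A} (hb : b ∈ T.Ag η) : T.rho x y c * b = 0 := by
  have hbx : b • x = 0 := smul_zero_of_bot T hb hx
    (Lg_bot T hl hm hne h η (η * h) hh.1 hη hh.2 hcη (Or.inl (mul_comm η h)))
  rw [mul_comm]
  have key := congrArg (fun f : Module.End F A => f c) (T.rho_smul_left b x y)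
  simp only [LinearMap.smul_apply, smul_eq_mul] at key
  rw [← key, hbx]
  simp

/-- `ρ`-generator × `ρ`-generator. -/
lemma rho_rho (hl : l ∈ T.Lambda1) (hm : m ∈ T.Lambda1)
    (hne : T.classOfA l ≠ T.classOfA m) {h k h' k' : G}
    (hh : h ∈ T.classOfA l) (hk : k ∈ T.classOfA l)
    (hh' : h' ∈ T.classOfA m) (hk' : k' ∈ T.classOfA m)
    {x y x' y' : L} {c c' : A}
    (hx : x ∈ T.Lg h) (hy : y ∈ T.Lg k) (hc : c ∈ T.Ag (h * k)⁻¹)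
    (hx' : x' ∈ T.Lg h') (hy' : y' ∈ T.Lg k') (hc' : c' ∈ T.Ag (h' * k')⁻¹) :
    T.rho x y c * T.rho x' y' c' = 0 := by
  have A1 : T.rho x y' c' = 0 :=
    rho_zero_of_bot T hx hy' hc'
      (Ag_bot T hl hm hne h h' (h * k' * (h' * k')⁻¹) hh.1 hh'.1 hh.2 hh'.2
        (Or.inr (by group)))
  have A2 : T.rho y y' c' = 0 :=
    rho_zero_of_bot T hy hy' hc'
      (Ag_bot T hl hm hne k h' (k * k' * (h' * k')⁻¹) hk.1 hh'.1 hk.2 hh'.2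
        (Or.inr (by group)))
  have C : T.rho (T.bracket x y x') y' c' = T.rho x y (T.rho x' y' c') := by
    have := congrArg (fun f : Module.End F A => f c') (T.rep₂ x y x' y')
    simpa [LinearMap.add_apply, Module.End.mul_apply, A1, A2] using this
  have D : ∀ d : A,
      d * T.rho (T.bracket x y x') y' c' = T.rho x y (d * T.rho x' y' c') := by
    intro d
    have Hop := T.rep₂ x y x' (d • y')
    simp only [T.rho_smul_right] at Hop
    have H := congrArg (fun f : Module.End F A => f c') Hop
    simp only [LinearMap.smul_apply, smul_eq_mul, LinearMap.add_apply, Module.End.mul_apply,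
      A1, A2, mul_zero, map_zero, add_zero] at H
    exact H
  have E := D c
  rw [C] at E
  have E2 := T.rho_der x y c (T.rho x' y' c')
  have := E.trans E2
  exact (left_eq_add.mp this)

end Aux

end GradedThreeLieRinehart

namespace GradedThreeLieRinehart

section Aux2
variable {F : Type*} [Field F] {G : Type*} [CommGroup G] [DecidableEq G]
  {A : Type*} [CommRing A] [Algebra F A]
  {L : Type*} [AddCommGroup L] [Module F L] [Module A L] [IsScalarTower F A L]
  (T : GradedThreeLieRinehart F G A L) {l m : G}

/-- Reduction of `∀ b ∈ 𝒜_{[μ]}, a * b = 0` to generators. -/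
lemma allB (a : A)
    (H1 : ∀ η, η ∈ T.Lambda1 → T.connA m η → ∀ b ∈ T.Ag η, a * b = 0)
    (H2 : ∀ h' k', h' ∈ T.classOfA m → k' ∈ T.classOfA m →
      ∀ x' ∈ T.Lg h', ∀ y' ∈ T.Lg k', ∀ c' ∈ T.Ag (h' * k')⁻¹, a * T.rho x' y' c' = 0) :
    ∀ b ∈ T.Aclass m, a * b = 0 := by
  intro b hb
  have hker : T.Aclass m ≤ LinearMap.ker (LinearMap.mulLeft F a) := by
    apply sup_le
    · apply Submodule.span_le.mpr
      rintro z (⟨η, hη, b₁, hb₁, b₂, hb₂, rfl⟩ | ⟨h', hh', k', hk', x', hx', y', hy', c', hc', rfl⟩)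
      · simp only [SetLike.mem_coe, LinearMap.mem_ker, LinearMap.mulLeft_apply]
        have h0 : a * b₂ = 0 := H1 η hη.1 hη.2 b₂ hb₂
        calc a * (b₁ * b₂) = b₁ * (a * b₂) := by ring
          _ = 0 := by rw [h0, mul_zero]
      · simp only [SetLike.mem_coe, LinearMap.mem_ker, LinearMap.mulLeft_apply]
        exact H2 h' k' hh'.1 hk'.1 x' hx' y' hy' c' hc'
    · refine iSup₂_le fun η hη => ?_
      intro b' hb'
      simp only [LinearMap.mem_ker, LinearMap.mulLeft_apply]
      exact H1 η hη.1 hη.2 b' hb'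
  simpa using hker hb

lemma homAll (hl : l ∈ T.Lambda1) (hm : m ∈ T.Lambda1)
    (hne : T.classOfA l ≠ T.classOfA m) {ν : G}
    (hν : ν ∈ T.Lambda1) (hcν : T.connA l ν) {a : A} (ha : a ∈ T.Ag ν) :
    ∀ b ∈ T.Aclass m, a * b = 0 := by
  refine allB T a (fun η hη hcη b hb => ?_) (fun h' k' hh' hk' x' hx' y' hy' c' hc' => ?_)
  · exact hom_hom T hl hm hne hν hcν hη hcη ha hb
  · exact hom_rho T hl hm hne hν hcν hh' hk' hx' hy' hc' ha

lemma rhoAll (hl : l ∈ T.Lambda1) (hm : m ∈ T.Lambda1)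
    (hne : T.classOfA l ≠ T.classOfA m) {h k : G}
    (hh : h ∈ T.classOfA l) (hk : k ∈ T.classOfA l)
    {x y : L} {c : A} (hx : x ∈ T.Lg h) (hy : y ∈ T.Lg k) (hc : c ∈ T.Ag (h * k)⁻¹) :
    ∀ b ∈ T.Aclass m, T.rho x y c * b = 0 := by
  refine allB T _ (fun η hη hcη b hb => ?_) (fun h' k' hh' hk' x' hx' y' hy' c' hc' => ?_)
  · exact rho_hom T hl hm hne hh hk hη hcη hx hy hc hb
  · exact rho_rho T hl hm hne hh hk hh' hk' hx hy hc hx' hy' hc'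

end Aux2

end GradedThreeLieRinehart

open GradedThreeLieRinehart in
/-- `𝒜_{[λ]} 𝒜_{[μ]} = 0` for distinct `Λ¹`-connection classes `[λ] ≠ [μ]`. -/
theorem Aclass_mul_distinct {F : Type*} [Field F] {G : Type*} [CommGroup G]
    [DecidableEq G] {A : Type*} [CommRing A] [Algebra F A]
    {L : Type*} [AddCommGroup L] [Module F L] [Module A L] [IsScalarTower F A L]
    (T : GradedThreeLieRinehart F G A L) (l m : G)
    (hl : l ∈ T.Lambda1) (hm : m ∈ T.Lambda1)
    (hne : T.classOfA l ≠ T.classOfA m) :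
    ∀ a ∈ T.Aclass l, ∀ b ∈ T.Aclass m, a * b = 0 := by
  intro a ha
  let Q : Submodule F A :=
    { carrier := {a | ∀ b ∈ T.Aclass m, a * b = 0}
      add_mem' := by
        intro u v hu hv b hb
        rw [add_mul, hu b hb, hv b hb, add_zero]
      zero_mem' := by
        intro b hb
        rw [zero_mul]
      smul_mem' := by
        intro r u hu b hb
        rw [Algebra.smul_mul_assoc, hu b hb, smul_zero] }
  have hQ : T.Aclass l ≤ Q := by
    apply sup_le
    · apply Submodule.span_le.mpr
      rintro z (⟨ν, hν, a₁, ha₁, a₂, ha₂, rfl⟩ | ⟨h, hh, k, hk, x, hx, y, hy, c, hc, rfl⟩)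
      · intro b hb
        have h0 : a₂ * b = 0 := homAll T hl hm hne hν.1 hν.2 ha₂ b hb
        calc a₁ * a₂ * b = a₁ * (a₂ * b) := by ring
          _ = 0 := by rw [h0, mul_zero]
      · intro b hb
        exact rhoAll T hl hm hne hh.1 hk.1 hx hy hc b hb
    · refine iSup₂_le fun ν hν => ?_
      intro a' ha' b hb
      exact homAll T hl hm hne hν.1 hν.2 ha' b hb
  exact hQ ha
end

section
/- Let (L, A) be a tight G-graded 3-Lie-Rinehart algebra of maximal length (dim L_g = 1 = dim A_λ for all g ∈ Σ¹, λ ∈ Λ¹) which is G-multiplicative. If I is a graded ideal of L with I ⊆ L_1, then I = {0}. -/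
/-!
Since `I ⊆ L₁`, anything of nontrivial degree acting on `I` lands in `I ∩ L_g = 0`. Writing
`1 = e + r` with `e ∈ A₁` and `r` of nontrivial degree, `e` acts as the identity on `I`, and by
tightness `e` is a combination of generators `A_{μ⁻¹}A_μ` and `ρ(L_h, L_k)(A_{(hk)⁻¹})`. The former
kill `I`; by multiplicativity and maximal length so do the latter, except when `k = h` has order
two. Then `[p, p, p] = c p ≠ 0` for `p` spanning `L_h`, which forces characteristic `2` and makes
`E = c⁻¹ [p, p, ·]` idempotent, and `ρ(p, p)(a)` acts as `c (E a - a E)`, an operator exchanging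
the two eigenspaces of `E`. These idempotents commute, and the identity of a nonzero subspace
stable under commuting idempotents `Eᵢ` is never a sum of operators `Xᵢ` with `Xᵢ` exchanging the
eigenspaces of `Eᵢ`: compressing by `E` and by `1 - E` removes one summand at a time.
-/

section OffDiagonal

variable {R : Type*} [Ring R]

def IsOffDiagonal (e x : R) : Prop :=
  e * x * e = 0 ∧ (1 - e) * x * (1 - e) = 0

theorem isOffDiagonal_zero (e : R) : IsOffDiagonal e 0 := by
  simp [IsOffDiagonal]

theorem IsOffDiagonal.smul {S : Type*} [Monoid S] [DistribMulAction S R] [IsScalarTower S R R]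
    [SMulCommClass S R R] {e x : R} (h : IsOffDiagonal e x) (t : S) :
    IsOffDiagonal e (t • x) := by
  simp only [IsOffDiagonal, smul_mul_assoc, mul_smul_comm, h.1, h.2, smul_zero, and_self]

theorem isOffDiagonal_commutator {e : R} (he : IsIdempotentElem e) (d : R) :
    IsOffDiagonal e (e * d - d * e) := by
  constructor
  · calc e * (e * d - d * e) * e = (e * e) * d * e - e * d * (e * e) := by noncomm_ring
      _ = 0 := by rw [he.eq, sub_self]
  · have h1 : e * (1 - e) = 0 := by rw [mul_sub, mul_one, he.eq, sub_self]
    have h2 : (1 - e) * e = 0 := by rw [sub_mul, one_mul, he.eq, sub_self]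
    calc (1 - e) * (e * d - d * e) * (1 - e)
        = ((1 - e) * e) * d * (1 - e) - (1 - e) * d * (e * (1 - e)) := by noncomm_ring
      _ = 0 := by rw [h1, h2, mul_zero, zero_mul, zero_mul, sub_self]

theorem IsOffDiagonal.compress {e x q : R} (h : IsOffDiagonal e x) (hq : Commute q e) :
    IsOffDiagonal e (q * x * q) := by
  have hq' : Commute q (1 - e) := (Commute.one_right q).sub_right hq
  have key : ∀ f, Commute q f → f * (q * x * q) * f = q * (f * x * f) * q := fun f hf => by
    simp only [mul_assoc, hf.eq, hf.symm.left_comm]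
  exact ⟨by rw [key e hq, h.1, mul_zero, zero_mul], by rw [key _ hq', h.2, mul_zero, zero_mul]⟩

end OffDiagonal

theorem Submodule.eq_bot_of_sum_isOffDiagonal {R M ι : Type*} [CommRing R] [AddCommGroup M]
    [Module R M] {E X : ι → Module.End R M} (hcomm : ∀ i j, Commute (E i) (E j))
    (hidem : ∀ i, IsIdempotentElem (E i)) (hoff : ∀ i, IsOffDiagonal (E i) (X i))
    (s : Finset ι) {I : Submodule R M} (hI : ∀ i, ∀ v ∈ I, E i v ∈ I)
    (hsum : ∀ v ∈ I, ∑ i ∈ s, X i v = v) : I = ⊥ := by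
  classical
  induction s using Finset.induction_on generalizing X I with
  | empty => exact (Submodule.eq_bot_iff I).2 fun v hv => by simpa using (hsum v hv).symm
  | insert a s ha ih =>
    have hproj : ∀ Q : Module.End R M, IsIdempotentElem Q → (∀ i, Commute Q (E i)) →
        (∀ v ∈ I, Q v ∈ I) → Q * X a * Q = 0 → ∀ v ∈ I, Q v = 0 := by
      intro Q hQ hQE hQI hQa v hv
      have hmap : I.map Q = ⊥ := by
        refine ih (X := fun i => Q * X i * Q) (fun i => (hoff i).compress (hQE i)) ?_ ?_
        · rintro i _ ⟨u, hu, rfl⟩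
          exact ⟨E i u, hI i u hu, LinearMap.congr_fun (hQE i).eq u⟩
        · rintro _ ⟨u, hu, rfl⟩
          have h := hsum (Q u) (hQI u hu)
          rw [Finset.sum_insert ha, ← eq_sub_iff_add_eq'] at h
          have hQQ : Q (Q u) = Q u := LinearMap.congr_fun hQ.eq u
          have hQaQ : Q (X a (Q u)) = 0 := LinearMap.congr_fun hQa u
          simp only [Module.End.mul_apply, hQQ]
          rw [← map_sum, h, map_sub, hQQ, hQaQ, sub_zero]
      exact (Submodule.eq_bot_iff _).1 hmap (Q v) ⟨v, hv, rfl⟩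
    refine (Submodule.eq_bot_iff I).2 fun v hv => ?_
    have hE : E a v = 0 := hproj (E a) (hidem a) (hcomm a) (hI a) (hoff a).1 v hv
    have hE' : (1 - E a) v = 0 :=
      hproj (1 - E a) (hidem a).one_sub (fun i => (Commute.one_left _).sub_left (hcomm a i))
        (fun u hu => I.sub_mem hu (hI a u hu)) (hoff a).2 v hv
    simpa [hE] using hE'

theorem Submodule.exists_smul_eq_of_finrank_eq_one {K V : Type*} [Field K] [AddCommGroup V]
    [Module K V] {W : Submodule K V} (hW : Module.finrank K W = 1) {p : V} (hpW : p ∈ W)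
    (hp : p ≠ 0) {v : V} (hv : v ∈ W) : ∃ α : K, v = α • p := by
  obtain ⟨α, hα⟩ := (finrank_eq_one_iff_of_nonzero' (⟨p, hpW⟩ : W) (by simpa using hp)).1 hW
    ⟨v, hv⟩
  exact ⟨α, congrArg Subtype.val hα.symm⟩

namespace GradedThreeLieRinehart

variable {F : Type*} [Field F] {G : Type*} [CommGroup G] [DecidableEq G]
  {A : Type*} [CommRing A] [Algebra F A]
  {L : Type*} [AddCommGroup L] [Module F L] [Module A L] [IsScalarTower F A L]
  (T : GradedThreeLieRinehart F G A L)

theorem bracket_cycle (x y z : L) : T.bracket x y z = T.bracket y z x := by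
  rw [T.skew₁, T.skew₂ y, neg_neg]

theorem commute_bracket_self (p q : L) : Commute (T.bracket p p) (T.bracket q q) := by
  ext v
  have h := T.fund q q v p p
  rw [T.bracket_cycle v p p, T.skew₂ (T.bracket q p p) v q, add_neg_cancel, zero_add,
    T.bracket_cycle (T.bracket q q v), T.bracket_cycle (T.bracket p p v)] at h
  exact h

theorem two_eq_zero_of_bracket_self_eq_smul {p : L} (hp : p ≠ 0) {c : F} (hc : c ≠ 0)
    (hppp : T.bracket p p p = c • p) : (2 : F) = 0 := by
  have h : (2 * c) • p = 0 := by
    rw [two_mul, add_smul, ← hppp, ← eq_neg_iff_add_eq_zero]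
    exact T.skew₁ p p p
  exact (mul_eq_zero.1 ((smul_eq_zero.1 h).resolve_right hp)).resolve_right hc

theorem bracket_self_mul_self {p : L} {c : F} (h2 : (2 : F) = 0)
    (hppp : T.bracket p p p = c • p) :
    T.bracket p p * T.bracket p p = c • T.bracket p p := by
  ext v
  have h := T.fund p p p p v
  rw [hppp, map_smul, LinearMap.smul_apply, LinearMap.smul_apply, ← two_smul F, h2, zero_smul,
    zero_add, T.bracket_cycle (T.bracket p p v)] at h
  exact h.symm

theorem eq_zero_of_mem_Lg_of_ne {g h : G} (hgh : g ≠ h) {v : L} (hg : v ∈ T.Lg g)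
    (hh : v ∈ T.Lg h) : v = 0 :=
  Submodule.disjoint_def.1 (T.decompL.submodule_iSupIndep.pairwiseDisjoint hgh) v hg hh

theorem bracket_self_ne_zero {h : G} (hL : Module.finrank F (T.Lg h) = 1) {x y z : L}
    (hx : x ∈ T.Lg h) (hy : y ∈ T.Lg h) (hxyz : T.bracket x y z ≠ 0) :
    T.bracket x x z ≠ 0 := by
  have hx0 : x ≠ 0 := by rintro rfl; simp at hxyz
  obtain ⟨α, rfl⟩ := Submodule.exists_smul_eq_of_finrank_eq_one hL hx hx0 hy
  intro h
  simp [h] at hxyz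

theorem rho_smul_eq (y z : L) (a : A) (v : L) :
    T.rho y z a • v = T.bracket y z (a • v) - a • T.bracket y z v := by
  rw [T.compat, add_sub_cancel_left]

theorem isIdempotentElem_inv_smul_bracket_self {p : L} {c : F} (hc : c ≠ 0) (h2 : (2 : F) = 0)
    (hppp : T.bracket p p p = c • p) : IsIdempotentElem (c⁻¹ • T.bracket p p) := by
  rw [IsIdempotentElem, smul_mul_smul_comm, T.bracket_self_mul_self h2 hppp, smul_smul,
    inv_mul_cancel_right₀ hc]

def ActsOffDiagonally (I : Submodule F L) (a : A) : Prop :=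
  ∃ (p : L) (t : F) (X : Module.End F L), IsIdempotentElem (t • T.bracket p p) ∧
    IsOffDiagonal (t • T.bracket p p) X ∧ ∀ v ∈ I, a • v = X v

section GradedIdeal

variable {T} {I : Submodule F L}

theorem bracket_mem_of_mem_right (hI : T.IsGradedIdeal I) {v : L} (hv : v ∈ I) (y z : L) :
    T.bracket y z v ∈ I :=
  T.bracket_cycle v y z ▸ hI.2.1 v hv y z

theorem smul_eq_zero_of_mem_Ag (hI : T.IsGradedIdeal I) (hI1 : I ≤ T.Lg 1) {l : G}
    (hl : l ≠ 1) {a : A} (ha : a ∈ T.Ag l) {v : L} (hv : v ∈ I) : a • v = 0 :=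
  T.eq_zero_of_mem_Lg_of_ne hl (mul_one l ▸ T.smul_grade l 1 a ha v (hI1 hv))
    (hI1 (hI.2.2.1 a v hv))

theorem bracket_eq_zero_of_mul_ne_one (hI : T.IsGradedIdeal I) (hI1 : I ≤ T.Lg 1) {g k : G}
    (hgk : g * k ≠ 1) {y z v : L} (hy : y ∈ T.Lg g) (hz : z ∈ T.Lg k) (hv : v ∈ I) :
    T.bracket y z v = 0 :=
  T.eq_zero_of_mem_Lg_of_ne hgk (mul_one (g * k) ▸ T.bracket_grade g k 1 y hy z hz v (hI1 hv))
    (hI1 (bracket_mem_of_mem_right hI hv y z))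

theorem exists_mem_Ag_one_smul_eq_self (hI : T.IsGradedIdeal I) (hI1 : I ≤ T.Lg 1) :
    ∃ e ∈ T.Ag 1, ∀ v ∈ I, e • v = v := by
  suffices h : ∀ a ∈ ⨆ g, T.Ag g, ∃ e ∈ T.Ag 1, ∀ v ∈ I, a • v = e • v by
    obtain ⟨e, he, hae⟩ := h 1 (T.decompA.submodule_iSup_eq_top ▸ Submodule.mem_top)
    exact ⟨e, he, fun v hv => by rw [← hae v hv, one_smul]⟩
  intro a ha
  induction ha using Submodule.iSup_induction' with
  | mem g a ha =>
    by_cases hg : g = 1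
    · exact ⟨a, hg ▸ ha, fun v _ => rfl⟩
    · exact ⟨0, zero_mem _, fun v hv => by rw [smul_eq_zero_of_mem_Ag hI hI1 hg ha hv, zero_smul]⟩
  | zero => exact ⟨0, zero_mem _, fun v _ => rfl⟩
  | add a b _ _ ha hb =>
    obtain ⟨e, he, hae⟩ := ha
    obtain ⟨e', he', hbe'⟩ := hb
    exact ⟨e + e', add_mem he he', fun v hv => by rw [add_smul, add_smul, hae v hv, hbe' v hv]⟩

theorem bracket_eq_zero_of_mul_eq_one (hI : T.IsGradedIdeal I) (hI1 : I ≤ T.Lg 1)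
    (hml : T.MaximalLength) (hgm : T.GMult) {h k : G} (hh : h ∈ T.Sigma1) (hk : k ∈ T.Sigma1)
    (hhk : h * k = 1) (hh2 : h * h ≠ 1) {y z w : L} (hy : y ∈ T.Lg h) (hz : z ∈ T.Lg k)
    (hw : w ∈ I) : T.bracket y z w = 0 := by
  have hhhk : h * h * k = h := by rw [mul_assoc, hhk, mul_one]
  obtain ⟨p, hp, p', hp', q, hq, hne⟩ := hgm.1 h hh h hh k hk (by rwa [hhhk])
  have hppq : T.bracket p p q ≠ 0 := bracket_self_ne_zero T (hml.1 h hh) hp hp' hne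
  have hp0 : p ≠ 0 := by rintro rfl; simp at hppq
  have hq0 : q ≠ 0 := by rintro rfl; simp at hppq
  obtain ⟨c, hc⟩ := Submodule.exists_smul_eq_of_finrank_eq_one (hml.1 h hh) hp hp0
    (hhhk ▸ T.bracket_grade h h k p hp p hp q hq)
  have hc0 : c ≠ 0 := by rintro rfl; simp [hc] at hppq
  have hkk : k * k ≠ 1 := by
    rw [← inv_eq_of_mul_eq_one_right hhk, ← mul_inv, ne_eq, inv_eq_one]
    exact hh2
  -- `[q, q, w] = 0` turns the fundamental identity for `[[p, p, q], q, w]` into `c [p, q, w] = 0`.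
  have hpq : T.bracket p q w = 0 := by
    have hf := T.fund p p q q w
    rw [hc, T.skew₂ (T.bracket p q w) q p, add_neg_cancel, zero_add,
      bracket_eq_zero_of_mul_ne_one hI hI1 hkk hq hq hw] at hf
    simpa [hc0] using hf
  obtain ⟨α, rfl⟩ := Submodule.exists_smul_eq_of_finrank_eq_one (hml.1 h hh) hp hp0 hy
  obtain ⟨β, rfl⟩ := Submodule.exists_smul_eq_of_finrank_eq_one (hml.1 k hk) hq hq0 hz
  simp [hpq]

theorem exists_bracket_self_eq_smul (hml : T.MaximalLength) (hgm : T.GMult) {h : G}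
    (hh : h ∈ T.Sigma1) (hh2 : h * h = 1) :
    ∃ p ∈ T.Lg h, p ≠ 0 ∧ ∃ c : F, c ≠ 0 ∧ T.bracket p p p = c • p := by
  have hhhh : h * h * h = h := by rw [hh2, one_mul]
  obtain ⟨p, hp, p', hp', q, hq, hne⟩ := hgm.1 h hh h hh h hh (by rwa [hhhh])
  have hppq : T.bracket p p q ≠ 0 := bracket_self_ne_zero T (hml.1 h hh) hp hp' hne
  have hp0 : p ≠ 0 := by rintro rfl; simp at hppq
  obtain ⟨β, rfl⟩ := Submodule.exists_smul_eq_of_finrank_eq_one (hml.1 h hh) hp hp0 hq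
  obtain ⟨c, hc⟩ := Submodule.exists_smul_eq_of_finrank_eq_one (hml.1 h hh) hp hp0
    (hhhh ▸ T.bracket_grade h h h p hp p hp p hp)
  refine ⟨p, hp, hp0, c, ?_, hc⟩
  rintro rfl
  simp [hc] at hppq

theorem actsOffDiagonally_of_smul_eq_zero {a : A} (ha : ∀ v ∈ I, a • v = 0) :
    T.ActsOffDiagonally I a :=
  ⟨0, 0, 0, by simp [IsIdempotentElem], isOffDiagonal_zero _, fun v hv => ha v hv⟩

theorem actsOffDiagonally_rho (hI : T.IsGradedIdeal I) (hI1 : I ≤ T.Lg 1)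
    (hml : T.MaximalLength) (hgm : T.GMult) {h k : G} (hh : h ∈ T.Sigma1) (hk : k ∈ T.Sigma1)
    {y z : L} (hy : y ∈ T.Lg h) (hz : z ∈ T.Lg k) (a : A) :
    T.ActsOffDiagonally I (T.rho y z a) := by
  by_cases hbad : h * k = 1 ∧ h * h = 1
  · obtain ⟨hhk, hh2⟩ := hbad
    obtain rfl : k = h := by
      rw [← inv_eq_of_mul_eq_one_right hhk, inv_eq_of_mul_eq_one_right hh2]
    obtain ⟨p, hp, hp0, c, hc0, hppp⟩ := exists_bracket_self_eq_smul hml hgm hh hh2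
    obtain ⟨α, rfl⟩ := Submodule.exists_smul_eq_of_finrank_eq_one (hml.1 k hh) hp hp0 hy
    obtain ⟨β, rfl⟩ := Submodule.exists_smul_eq_of_finrank_eq_one (hml.1 k hh) hp hp0 hz
    have hE := T.isIdempotentElem_inv_smul_bracket_self hc0
      (T.two_eq_zero_of_bracket_self_eq_smul hp0 hc0 hppp) hppp
    set E := c⁻¹ • T.bracket p p
    set D := DistribSMul.toLinearMap F L a
    refine ⟨p, c⁻¹, (α * β * c) • (E * D - D * E), hE, (isOffDiagonal_commutator hE D).smul _,
      fun v _ => ?_⟩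
    rw [T.rho_smul_eq]
    simp only [E, D, map_smul, LinearMap.smul_apply, LinearMap.sub_apply,
      Module.End.mul_apply, DistribSMul.toLinearMap_apply, ← smul_sub, smul_smul]
    rw [smul_comm a, ← smul_sub, mul_inv_cancel_right₀ hc0, mul_comm]
  · have hzero : ∀ w ∈ I, T.bracket y z w = 0 := fun w hw => by
      by_cases hhk : h * k = 1
      · exact bracket_eq_zero_of_mul_eq_one hI hI1 hml hgm hh hk hhk (hbad ⟨hhk, ·⟩) hy hz hw
      · exact bracket_eq_zero_of_mul_ne_one hI hI1 hhk hy hz hw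
    refine actsOffDiagonally_of_smul_eq_zero fun v hv => ?_
    rw [rho_smul_eq, hzero _ (hI.2.2.1 a v hv), hzero v hv, smul_zero, sub_zero]

theorem exists_offDiagonal_of_mem_Aone (hI : T.IsGradedIdeal I) (hI1 : I ≤ T.Lg 1)
    (hml : T.MaximalLength) (hgm : T.GMult) {e : A} (he : e ∈ T.Aone) :
    ∃ (n : ℕ) (p : Fin n → L) (t : Fin n → F) (X : Fin n → Module.End F L),
      (∀ i, IsIdempotentElem (t i • T.bracket (p i) (p i))) ∧
      (∀ i, IsOffDiagonal (t i • T.bracket (p i) (p i)) (X i)) ∧ ∀ v ∈ I, e • v = ∑ i, X i v := by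
  obtain ⟨n, γ, gen, rfl⟩ := Submodule.mem_span_set'.1 he
  have hgen : ∀ i, T.ActsOffDiagonally I (gen i) := by
    intro i
    rcases (gen i).2 with ⟨m, hm, b, -, c, hc, hbc⟩ | ⟨h, hh, k, hk, y, hy, z, hz, a, -, hyz⟩
    · refine actsOffDiagonally_of_smul_eq_zero fun v hv => ?_
      rw [hbc, mul_smul, smul_eq_zero_of_mem_Ag hI hI1 hm.1 hc hv, smul_zero]
    · rw [hyz]
      exact actsOffDiagonally_rho hI hI1 hml hgm hh.2 hk.2 hy hz a
  choose p t X hidem hoff hX using hgen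
  refine ⟨n, p, t, fun i => γ i • X i, hidem, fun i => (hoff i).smul _, fun v hv => ?_⟩
  rw [Finset.sum_smul]
  exact Finset.sum_congr rfl fun i _ => by rw [smul_assoc, hX i v hv]; rfl

end GradedIdeal

end GradedThreeLieRinehart

open GradedThreeLieRinehart in
/-- In a tight, `G`-multiplicative graded `3`-Lie–Rinehart algebra of maximal
length, any graded ideal of `L` contained in `L₁` is zero. -/
theorem graded_ideal_in_L1_eq_bot {F : Type*} [Field F] {G : Type*} [CommGroup G]
    [DecidableEq G] {A : Type*} [CommRing A] [Algebra F A]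
    {L : Type*} [AddCommGroup L] [Module F L] [Module A L] [IsScalarTower F A L]
    (T : GradedThreeLieRinehart F G A L)
    (ht : T.Tight) (hml : T.MaximalLength) (hgm : T.GMult) :
    ∀ I : Submodule F L, T.IsGradedIdeal I → I ≤ T.Lg 1 → I = ⊥ := by
  intro I hI hI1
  obtain ⟨e, he, hev⟩ := exists_mem_Ag_one_smul_eq_self hI hI1
  rw [ht.2.2.2.2.2.2] at he
  obtain ⟨n, p, t, X, hidem, hoff, hX⟩ := exists_offDiagonal_of_mem_Aone hI hI1 hml hgm he
  refine Submodule.eq_bot_of_sum_isOffDiagonal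
    (fun i j => ((T.commute_bracket_self (p i) (p j)).smul_left _).smul_right _) hidem hoff
    Finset.univ (fun i v hv => I.smul_mem _ (bracket_mem_of_mem_right hI hv _ _))
    fun v hv => ?_
  rw [← hX v hv, hev v hv]
end
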